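/- arXiv:1609.05892 — 13 statements merged into one kernel-verified Lean document; each statement's English description precedes it below -/
import Mathlib

section
/- Let A be a nonzero symmetric composition algebra over a field F of characteristic ≠ 2, and let (g₁, g₂, g₃) be a triple of bijective F-linear maps of A satisfying the global triality relation g_j(xy) = (g_{j+1}x)(g_{j+2}y) for all x, y ∈ A and all j = 1, 2, 3 (indices modulo 3). Then each g_j is an isometry of the form: ⟨g_j x | g_j y⟩ = ⟨x | y⟩ for all x, y ∈ A and j = 1, 2, 3. -/
/-!
Write `n(x) = ⟨x|x⟩` and fix `y₀ ≠ 0`. Applying `g_j` to `(x y₀) x = n(x) y₀` and expanding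
the left side by triality twice gives `((g_{j+2} x)(g_j y₀))(g_{j+2} x) = n(g_{j+2} x) g_j y₀`,
so `n(x) g_j y₀ = n(g_{j+2} x) g_j y₀` and every `g_j` preserves `n`. Polarization
(characteristic `≠ 2`) upgrades this to preservation of the form.
-/

namespace LinearMap.BilinForm

variable {F A : Type*} [Field F] [AddCommGroup A] [Module F A]

theorem apply_apply_eq_of_apply_self_eq [NeZero (2 : F)] {B : LinearMap.BilinForm F A}
    (hB : B.IsSymm) (f : A →ₗ[F] A) (hf : ∀ x, B (f x) (f x) = B x x) (x y : A) :
    B (f x) (f y) = B x y :=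
  LinearMap.congr_fun₂ (ext_of_isSymm (B := B.compl₁₂ f f) ⟨fun u v ↦ hB.eq (f u) (f v)⟩ hB hf) x y

end LinearMap.BilinForm

section Triality

variable {F A : Type*} [Field F] [AddCommGroup A] [Module F A]

theorem apply_self_eq_of_triality (mul : A →ₗ[F] A →ₗ[F] A) (B : LinearMap.BilinForm F A)
    (hcomp : ∀ x y, mul (mul x y) x = B x x • y) (f : A →ₗ[F] A) (a b : A → A)
    (hf : ∀ x y, f (mul x y) = mul (a x) (b y)) (ha : ∀ x y, a (mul x y) = mul (b x) (f y))
    {y₀ : A} (hy₀ : f y₀ ≠ 0) (x : A) :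
    B (b x) (b x) = B x x := by
  have h : B x x • f y₀ = B (b x) (b x) • f y₀ := calc
    B x x • f y₀ = f (mul (mul x y₀) x) := by rw [hcomp, map_smul]
    _ = mul (mul (b x) (f y₀)) (b x) := by rw [hf, ha]
    _ = B (b x) (b x) • f y₀ := hcomp _ _
  exact (smul_left_injective F hy₀ h).symm

end Triality

theorem triality_group_isometry_general
    (F : Type*) [Field F] (h2 : (2 : F) ≠ 0)
    (A : Type*) [AddCommGroup A] [Module F A] [Nontrivial A]
    (mul : A →ₗ[F] A →ₗ[F] A)
    (B : LinearMap.BilinForm F A)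
    (hBsymm : ∀ x y : A, B x y = B y x)
    (hcomp₁ : ∀ x y : A, mul (mul x y) x = B x x • y)
    (g : Fin 3 → (A ≃ₗ[F] A))
    (htri : ∀ (j : Fin 3) (x y : A),
      g j (mul x y) = mul (g (j + 1) x) (g (j + 2) y)) :
    ∀ (j : Fin 3) (x y : A), B (g j x) (g j y) = B x y := by
  have : NeZero (2 : F) := ⟨h2⟩
  obtain ⟨y₀, hy₀⟩ := exists_ne (0 : A)
  have hnorm (k : Fin 3) (x : A) : B (g k x) (g k x) = B x x := by
    refine apply_self_eq_of_triality mul B hcomp₁ (g (k + 1)) (g (k + 2)) (g k)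
      (fun u v ↦ ?_) (fun u v ↦ ?_) ((g (k + 1)).map_ne_zero_iff.mpr hy₀) x
    · simpa [add_assoc] using htri (k + 1) u v
    · simpa [add_assoc] using htri (k + 2) u v
  intro j
  exact LinearMap.BilinForm.apply_apply_eq_of_apply_self_eq ⟨hBsymm⟩ (g j).toLinearMap (hnorm j)

/-- In a nonzero symmetric composition algebra, every triple of
bijective linear maps `(g₁, g₂, g₃)` satisfying the global triality relation
`g_j(xy) = (g_{j+1}x)(g_{j+2}y)` (indices mod 3) consists of isometries of the
bilinear form.  Paper subscripts `1, 2, 3` are encoded as `1, 2, 0 : Fin 3`. -/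
theorem triality_group_isometry
    (F : Type*) [Field F] (h2 : (2 : F) ≠ 0)
    (A : Type*) [AddCommGroup A] [Module F A] [Nontrivial A]
    (mul : A →ₗ[F] A →ₗ[F] A)
    (B : LinearMap.BilinForm F A)
    (hBsymm : ∀ x y : A, B x y = B y x)
    (hBnd : B.Nondegenerate)
    (hcomp₁ : ∀ x y : A, mul (mul x y) x = B x x • y)
    (hcomp₂ : ∀ x y : A, mul x (mul y x) = B x x • y)
    (hmult : ∀ x y : A, B (mul x y) (mul x y) = B x x * B y y)
    (hassoc : ∀ x y z : A, B (mul x y) z = B x (mul y z))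
    (g : Fin 3 → (A ≃ₗ[F] A))
    (htri : ∀ (j : Fin 3) (x y : A),
      g j (mul x y) = mul (g (j + 1) x) (g (j + 2) y)) :
    ∀ (j : Fin 3) (x y : A), B (g j x) (g j y) = B x y :=
  triality_group_isometry_general F h2 A mul B hBsymm hcomp₁ g htri
end

section
/- Let A be a symmetric composition algebra over a field F of characteristic ≠ 2, and let (t₁, t₂, t₃) be a triple of F-linear endomorphisms of A satisfying the local triality relation t_j(xy) = (t_{j+1}x)y + x(t_{j+2}y) for all x, y ∈ A and all j = 1, 2, 3 (indices modulo 3). Then each t_j is skew-adjoint with respect to the form: ⟨t_j x | y⟩ = −⟨x | t_j y⟩ for all x, y ∈ A and j = 1, 2, 3. -/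
/-!
Polarizing `(xy)x = ⟨x|x⟩y` gives `(uy)v + (vy)u = 2⟨u|v⟩y`. Applying `t_{j+1}` to
`(xz)x = ⟨x|x⟩z` and expanding twice with the triality relation yields
`⟨x|x⟩ t_{j+1}z = ((t_j x)z)x + (xz)(t_j x) + (x(t_{j+1}z))x = 2⟨t_j x|x⟩z + ⟨x|x⟩ t_{j+1}z`,
so `⟨t_j x|x⟩ = 0` for every `x`, and polarizing once more gives skew-adjointness.
-/

section SymmetricComposition

variable {R A : Type*} [CommRing R] [AddCommGroup A] [Module R A]
  {mul : A →ₗ[R] A →ₗ[R] A} {B : LinearMap.BilinForm R A}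

theorem mul_mul_add_mul_mul_eq_two_mul_smul (hBsymm : ∀ x y, B x y = B y x)
    (hcomp : ∀ x y, mul (mul x y) x = B x x • y) (u v y : A) :
    mul (mul u y) v + mul (mul v y) u = (2 * B u v) • y := by
  have h := hcomp (u + v) y
  simp only [map_add, LinearMap.add_apply, hcomp, hBsymm v u] at h
  linear_combination (norm := module) h

theorem two_mul_apply_self_smul_eq_zero (hBsymm : ∀ x y, B x y = B y x)
    (hcomp : ∀ x y, mul (mul x y) x = B x x • y) {f g h : A →ₗ[R] A}
    (hg : ∀ a b, g (mul a b) = mul (h a) b + mul a (f b))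
    (hh : ∀ a b, h (mul a b) = mul (f a) b + mul a (g b)) (x z : A) :
    (2 * B (f x) x) • z = 0 := by
  have key : B x x • g z = (2 * B (f x) x) • z + B x x • g z :=
    calc B x x • g z = g (mul (mul x z) x) := by rw [hcomp, map_smul]
      _ = (mul (mul (f x) z) x + mul (mul x z) (f x)) + mul (mul x (g z)) x := by
        rw [hg, hh, map_add, LinearMap.add_apply]
        abel
      _ = (2 * B (f x) x) • z + B x x • g z := by
        rw [mul_mul_add_mul_mul_eq_two_mul_smul hBsymm hcomp, hcomp]
  exact right_eq_add.mp key

theorem apply_neg_of_apply_self_eq_zero (hBsymm : ∀ x y, B x y = B y x) {f : A →ₗ[R] A}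
    (hf : ∀ x, B (f x) x = 0) (x y : A) : B (f x) y = -B x (f y) := by
  have h := hf (x + y)
  simp only [map_add, LinearMap.add_apply, hf, hBsymm (f y) x] at h
  linear_combination h

end SymmetricComposition

theorem apply_self_eq_zero_of_two_mul_smul_eq_zero {F A : Type*} [Field F] [AddCommGroup A]
    [Module F A] (h2 : (2 : F) ≠ 0) {B : LinearMap.BilinForm F A} {f : A →ₗ[F] A}
    (hf : ∀ x (z : A), (2 * B (f x) x) • z = 0) (x : A) : B (f x) x = 0 := by
  cases subsingleton_or_nontrivial A with
  | inl _ => simp [Subsingleton.elim x 0]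
  | inr _ =>
    obtain ⟨z, hz⟩ := exists_ne (0 : A)
    simpa [h2, hz] using hf x z

-- Paper subscripts `1, 2, 3` are `1, 2, 0 : Fin 3`.
theorem local_triality_skew_adjoint_general
    (F : Type*) [Field F] (h2 : (2 : F) ≠ 0)
    (A : Type*) [AddCommGroup A] [Module F A]
    (mul : A →ₗ[F] A →ₗ[F] A)
    (B : LinearMap.BilinForm F A)
    (hBsymm : ∀ x y : A, B x y = B y x)
    (hcomp₁ : ∀ x y : A, mul (mul x y) x = B x x • y)
    (t : Fin 3 → (A →ₗ[F] A))
    (htri : ∀ (j : Fin 3) (x y : A),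
      t j (mul x y) = mul (t (j + 1) x) y + mul x (t (j + 2) y)) :
    ∀ (j : Fin 3) (x y : A), B (t j x) y = -(B x (t j y)) := by
  intro j
  obtain ⟨e₁, e₂, e₃, e₄⟩ : j + 1 + 1 = j + 2 ∧ j + 1 + 2 = j ∧ j + 2 + 1 = j ∧ j + 2 + 2 = j + 1 := by
    revert j; decide
  refine apply_neg_of_apply_self_eq_zero hBsymm
    (apply_self_eq_zero_of_two_mul_smul_eq_zero h2
      (two_mul_apply_self_smul_eq_zero hBsymm hcomp₁ (g := t (j + 1)) (h := t (j + 2)) ?_ ?_))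
  · simpa only [e₁, e₂] using htri (j + 1)
  · simpa only [e₃, e₄] using htri (j + 2)

/-- In a symmetric composition algebra, every triple of linear
endomorphisms `(t₁, t₂, t₃)` satisfying the local triality relation
`t_j(xy) = (t_{j+1}x)y + x(t_{j+2}y)` (indices mod 3) consists of maps
skew-adjoint with respect to the form.  Paper subscripts `1, 2, 3` are encoded
as `1, 2, 0 : Fin 3`. -/
theorem local_triality_skew_adjoint
    (F : Type*) [Field F] (h2 : (2 : F) ≠ 0)
    (A : Type*) [AddCommGroup A] [Module F A]
    (mul : A →ₗ[F] A →ₗ[F] A)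
    (B : LinearMap.BilinForm F A)
    (hBsymm : ∀ x y : A, B x y = B y x)
    (hBnd : B.Nondegenerate)
    (hcomp₁ : ∀ x y : A, mul (mul x y) x = B x x • y)
    (hcomp₂ : ∀ x y : A, mul x (mul y x) = B x x • y)
    (hmult : ∀ x y : A, B (mul x y) (mul x y) = B x x * B y y)
    (hassoc : ∀ x y z : A, B (mul x y) z = B x (mul y z))
    (t : Fin 3 → (A →ₗ[F] A))
    (htri : ∀ (j : Fin 3) (x y : A),
      t j (mul x y) = mul (t (j + 1) x) y + mul x (t (j + 2) y)) :
    ∀ (j : Fin 3) (x y : A), B (t j x) y = -(B x (t j y)) :=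
  local_triality_skew_adjoint_general F h2 A mul B hBsymm hcomp₁ t htri
end

section
/- Let A be a regular triality algebra over a field F of characteristic ≠ 2 satisfying Condition (B) or Condition (C). Then for every triple (g₁, g₂, g₃) of bijective F-linear maps of A satisfying g_j(xy) = (g_{j+1}x)(g_{j+2}y) for all x, y ∈ A and all j (indices modulo 3), one has g_j ∘ d_k(x, y) ∘ g_j⁻¹ = d_k(g_{j−k}x, g_{j−k}y) for all j, k = 1, 2, 3 (indices modulo 3) and all x, y ∈ A. -/
/-!
The conjugation formulas for `d₁` and `d₂` are immediate from their definitions in terms of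
left and right multiplications and the triality relation for `g`. For `d₃`, which is not given
by a formula, the derivation relation for `j = 3` expresses `d₃(x, y)(uv)` through `d₁` and `d₂`,
so the formula holds on products, hence everywhere under Condition (B). Under Condition (C) the
relation for `j = 2` shows that the two sides of the formula for `d₃(x, y)w`, multiplied on the
right by any `v`, agree, so their difference is a left annihilator and vanishes.
-/

namespace RegularTrialityAlgebra

variable {R A : Type*} [CommRing R] [AddCommGroup A] [Module R A]
  {mul : A →ₗ[R] A →ₗ[R] A} {d : Fin 3 → A → A → Module.End R A} {g : Fin 3 → A ≃ₗ[R] A}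

theorem map_d_one
    (htri : ∀ (j : Fin 3) (x y : A), g j (mul x y) = mul (g (j + 1) x) (g (j + 2) y))
    (hd1 : ∀ x y z : A, d 1 x y z = mul (mul x z) y - mul (mul y z) x)
    (j : Fin 3) (x y w : A) :
    g j (d 1 x y w) = d 1 (g (j + 2) x) (g (j + 2) y) (g j w) := by
  simp only [hd1, map_sub, htri, show j + 1 + 1 = j + 2 by omega, show j + 1 + 2 = j by omega]

theorem map_d_two
    (htri : ∀ (j : Fin 3) (x y : A), g j (mul x y) = mul (g (j + 1) x) (g (j + 2) y))
    (hd2 : ∀ x y z : A, d 2 x y z = mul y (mul z x) - mul x (mul z y))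
    (j : Fin 3) (x y w : A) :
    g j (d 2 x y w) = d 2 (g (j + 1) x) (g (j + 1) y) (g j w) := by
  simp only [hd2, map_sub, htri, show j + 2 + 1 = j by omega, show j + 2 + 2 = j + 1 by omega]

theorem map_d_zero_mul
    (htri : ∀ (j : Fin 3) (x y : A), g j (mul x y) = mul (g (j + 1) x) (g (j + 2) y))
    (hd1 : ∀ x y z : A, d 1 x y z = mul (mul x z) y - mul (mul y z) x)
    (hd2 : ∀ x y z : A, d 2 x y z = mul y (mul z x) - mul x (mul z y))
    (hder : ∀ (j : Fin 3) (x y u v : A),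
      d j x y (mul u v) = mul (d (j + 1) x y u) v + mul u (d (j + 2) x y v))
    (j : Fin 3) (x y u v : A) :
    g j (d 0 x y (mul u v)) = d 0 (g j x) (g j y) (g j (mul u v)) := by
  have hprod := hder 0 x y u v
  have hprod' := hder 0 (g j x) (g j y) (g (j + 1) u) (g (j + 2) v)
  rw [zero_add, zero_add] at hprod hprod'
  simp only [hprod, hprod', map_add, htri, map_d_one htri hd1, map_d_two htri hd2,
    show j + 1 + 2 = j by omega, show j + 2 + 1 = j by omega]

theorem map_d_zero_of_span_mul_eq_top
    (htri : ∀ (j : Fin 3) (x y : A), g j (mul x y) = mul (g (j + 1) x) (g (j + 2) y))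
    (hd1 : ∀ x y z : A, d 1 x y z = mul (mul x z) y - mul (mul y z) x)
    (hd2 : ∀ x y z : A, d 2 x y z = mul y (mul z x) - mul x (mul z y))
    (hder : ∀ (j : Fin 3) (x y u v : A),
      d j x y (mul u v) = mul (d (j + 1) x y u) v + mul u (d (j + 2) x y v))
    (hB : Submodule.span R {z : A | ∃ x y : A, mul x y = z} = ⊤)
    (j : Fin 3) (x y w : A) :
    g j (d 0 x y w) = d 0 (g j x) (g j y) (g j w) := by
  have hext : (g j).toLinearMap ∘ₗ d 0 x y = d 0 (g j x) (g j y) ∘ₗ (g j).toLinearMap := by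
    refine LinearMap.ext_on hB ?_
    rintro _ ⟨u, v, rfl⟩
    exact map_d_zero_mul htri hd1 hd2 hder j x y u v
  exact LinearMap.congr_fun hext w

theorem map_d_zero_of_left_annihilator
    (htri : ∀ (j : Fin 3) (x y : A), g j (mul x y) = mul (g (j + 1) x) (g (j + 2) y))
    (hd1 : ∀ x y z : A, d 1 x y z = mul (mul x z) y - mul (mul y z) x)
    (hd2 : ∀ x y z : A, d 2 x y z = mul y (mul z x) - mul x (mul z y))
    (hder : ∀ (j : Fin 3) (x y u v : A),
      d j x y (mul u v) = mul (d (j + 1) x y u) v + mul u (d (j + 2) x y v))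
    (hC : ∀ b : A, (∀ y : A, mul b y = 0) → b = 0)
    (j : Fin 3) (x y w : A) :
    g j (d 0 x y w) = d 0 (g j x) (g j y) (g j w) := by
  refine sub_eq_zero.mp (hC _ fun v => ?_)
  obtain ⟨v, rfl⟩ := (g (j + 1)).surjective v
  have hmapped := congrArg (g (j + 2)) (hder 2 x y w v)
  have hmapped' := hder 2 (g j x) (g j y) (g j w) (g (j + 1) v)
  simp only [map_d_two htri hd2, map_add, htri, map_d_one htri hd1,
    show (2 : Fin 3) + 1 = 0 by rfl, show (2 : Fin 3) + 2 = 1 by rfl,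
    show j + 2 + 1 = j by omega, show j + 2 + 2 = j + 1 by omega,
    show j + 1 + 2 = j by omega] at hmapped hmapped'
  rw [map_sub, LinearMap.sub_apply, sub_eq_zero]
  exact add_right_cancel (hmapped.symm.trans hmapped')

end RegularTrialityAlgebra

open RegularTrialityAlgebra in
theorem regular_triality_conjugation_general
    (F : Type*) [Field F]
    (A : Type*) [AddCommGroup A] [Module F A]
    (mul : A →ₗ[F] A →ₗ[F] A)
    (d : Fin 3 → A → A → Module.End F A)
    -- d₁(x,y) = R(y)L(x) − R(x)L(y)
    (hd1 : ∀ x y z : A, d 1 x y z = mul (mul x z) y - mul (mul y z) x)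
    -- d₂(x,y) = L(y)R(x) − L(x)R(y)
    (hd2 : ∀ x y z : A, d 2 x y z = mul y (mul z x) - mul x (mul z y))
    -- the triality derivation relation
    (hder : ∀ (j : Fin 3) (x y u v : A),
      d j x y (mul u v) = mul (d (j + 1) x y u) v + mul u (d (j + 2) x y v))
    -- Condition (B) or Condition (C)
    (hBC : (Submodule.span F {z : A | ∃ x y : A, mul x y = z} = ⊤) ∨
      (∀ b : A, ((∀ y : A, mul b y = 0) ∨ (∀ y : A, mul y b = 0)) → b = 0))
    (g : Fin 3 → (A ≃ₗ[F] A))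
    (htri : ∀ (j : Fin 3) (x y : A),
      g j (mul x y) = mul (g (j + 1) x) (g (j + 2) y)) :
    ∀ (j k : Fin 3) (x y z : A),
      g j (d k x y ((g j).symm z)) = d k (g (j - k) x) (g (j - k) y) z := by
  have map_d_zero : ∀ (j : Fin 3) (x y w : A), g j (d 0 x y w) = d 0 (g j x) (g j y) (g j w) := by
    rcases hBC with hB | hC
    · exact map_d_zero_of_span_mul_eq_top htri hd1 hd2 hder hB
    · exact map_d_zero_of_left_annihilator htri hd1 hd2 hder fun b hb => hC b (Or.inl hb)
  intro j k x y z
  obtain ⟨w, rfl⟩ := (g j).surjective z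
  rw [LinearEquiv.symm_apply_apply]
  obtain rfl | rfl | rfl : k = 0 ∨ k = 1 ∨ k = 2 := by omega
  · rw [sub_zero]
    exact map_d_zero j x y w
  · rw [show j - 1 = j + 2 by omega]
    exact map_d_one htri hd1 j x y w
  · rw [show j - 2 = j + 1 by omega]
    exact map_d_two htri hd2 j x y w

/-- Let `A` be a regular triality algebra over a field of
characteristic ≠ 2 satisfying Condition (B) or Condition (C).  Then for every
triple `(g₁, g₂, g₃)` of bijective linear maps satisfying the global triality
relation, one has `g_j ∘ d_k(x, y) ∘ g_j⁻¹ = d_k(g_{j−k}x, g_{j−k}y)` for all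
`j, k` (mod 3).  Paper subscripts `1, 2, 3` are encoded as `1, 2, 0 : Fin 3`,
so `d 1 = d₁`, `d 2 = d₂`, `d 0 = d₃`. -/
theorem regular_triality_conjugation
    (F : Type*) [Field F] (h2 : (2 : F) ≠ 0)
    (A : Type*) [AddCommGroup A] [Module F A]
    (mul : A →ₗ[F] A →ₗ[F] A)
    (d : Fin 3 → A → A → Module.End F A)
    -- d₁(x,y) = R(y)L(x) − R(x)L(y)
    (hd1 : ∀ x y z : A, d 1 x y z = mul (mul x z) y - mul (mul y z) x)
    -- d₂(x,y) = L(y)R(x) − L(x)R(y)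
    (hd2 : ∀ x y z : A, d 2 x y z = mul y (mul z x) - mul x (mul z y))
    -- d₃ is antisymmetric
    (hd3 : ∀ x y : A, d 0 y x = -(d 0 x y))
    -- the triality derivation relation
    (hder : ∀ (j : Fin 3) (x y u v : A),
      d j x y (mul u v) = mul (d (j + 1) x y u) v + mul u (d (j + 2) x y v))
    -- Condition (B) or Condition (C)
    (hBC : (Submodule.span F {z : A | ∃ x y : A, mul x y = z} = ⊤) ∨
      (∀ b : A, ((∀ y : A, mul b y = 0) ∨ (∀ y : A, mul y b = 0)) → b = 0))
    (g : Fin 3 → (A ≃ₗ[F] A))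
    (htri : ∀ (j : Fin 3) (x y : A),
      g j (mul x y) = mul (g (j + 1) x) (g (j + 2) y)) :
    ∀ (j k : Fin 3) (x y z : A),
      g j (d k x y ((g j).symm z)) = d k (g (j - k) x) (g (j - k) y) z :=
  regular_triality_conjugation_general F A mul d hd1 hd2 hder hBC g htri
end

section
/- Let A be the 2-dimensional symmetric composition algebra with basis e, f. (Forward direction) Let q₁, q₂, q₃ ∈ A satisfy ⟨q₁|q₁⟩ = ⟨q₂|q₂⟩ = ⟨q₃|q₃⟩ = 1 and ⟨q₃|q₁q₂⟩ = 0, and define p_j = −q_{j+1}q_{j+2} (indices modulo 3). Then for all j = 1, 2, 3: p_{j+1}p_{j+2} = p_j, p_{j+1}q_{j+2} = q_{j+1}p_{j+2} = −q_j, q_{j+1}q_{j+2} = −p_j, ⟨p_j|p_j⟩ = 1, and ⟨p_j|q_j⟩ = 0. (Converse) If p_j, q_j ∈ A satisfy all these relations together with ⟨q_j|q_j⟩ = 1, then ⟨q₃|q₁q₂⟩ = 0. -/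
/-!
Since `⟨z|xy⟩ = ⟨x|yz⟩`, the
orthogonality `⟨q₃|q₁q₂⟩ = 0` holds for every cyclic rotation of the indices. The relations
involving a single `p` are the composition identities `(xy)x = x(yx) = ⟨x|x⟩y` and
`⟨xy|xy⟩ = ⟨x|x⟩⟨y|y⟩`, while `p_{j+1}p_{j+2} = p_j` comes from the linearisation
`x(yz) + z(yx) = 2⟨x|z⟩y` at `x = q_{j+2}q_j`, `y = q_j`, `z = q_{j+1}`, where `⟨x|z⟩ = 0`.
Conversely `⟨q₃|q₁q₂⟩ = -⟨q₃|p₃⟩ = 0`.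
-/

section SymmetricComposition

variable {R A : Type*} [CommRing R] [AddCommGroup A] [Module R A]
  {mul : A →ₗ[R] A →ₗ[R] A} {B : LinearMap.BilinForm R A}

theorem bilin_mul_cyclic (hBsymm : ∀ x y, B x y = B y x)
    (hassoc : ∀ x y z, B (mul x y) z = B x (mul y z)) (x y z : A) :
    B z (mul x y) = B x (mul y z) :=
  (hBsymm _ _).trans (hassoc _ _ _)

theorem bilin_mul_self_mul (hcomp₂ : ∀ x y, mul x (mul y x) = B x x • y)
    (hassoc : ∀ x y z, B (mul x y) z = B x (mul y z)) (x y : A) :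
    B (mul x y) (mul x y) = B x x * B y y := by
  rw [hassoc, hcomp₂ y x, map_smul, smul_eq_mul, mul_comm]

theorem mul_mul_add_mul_mul (hBsymm : ∀ x y, B x y = B y x)
    (hcomp₂ : ∀ x y, mul x (mul y x) = B x x • y) (x y z : A) :
    mul x (mul y z) + mul z (mul y x) = (2 * B x z) • y := by
  have h := hcomp₂ (x + z) y
  simp only [map_add, LinearMap.add_apply, hcomp₂ x y, hcomp₂ z y, hBsymm z x] at h
  linear_combination (norm := module) h

theorem mul_mul_mul_of_bilin_mul_eq_zero (hBsymm : ∀ x y, B x y = B y x)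
    (hcomp₂ : ∀ x y, mul x (mul y x) = B x x • y)
    (hassoc : ∀ x y z, B (mul x y) z = B x (mul y z)) {a b c : A} (ha : B a a = 1)
    (horth : B a (mul b c) = 0) :
    mul (mul c a) (mul a b) = -mul b c := by
  have hz : B (mul c a) b = 0 := by
    rw [hassoc, bilin_mul_cyclic hBsymm hassoc, horth]
  have h := mul_mul_add_mul_mul hBsymm hcomp₂ (mul c a) a b
  rwa [hcomp₂, ha, one_smul, hz, mul_zero, zero_smul, add_eq_zero_iff_eq_neg] at h

theorem bilin_mul_eq_zero_rotate (hBsymm : ∀ x y, B x y = B y x)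
    (hassoc : ∀ x y z, B (mul x y) z = B x (mul y z)) {q : Fin 3 → A}
    (h0 : B (q 0) (mul (q 1) (q 2)) = 0) (j : Fin 3) :
    B (q j) (mul (q (j + 1)) (q (j + 2))) = 0 := by
  have hcyc := bilin_mul_cyclic hBsymm hassoc
  fin_cases j
  · exact h0
  · show B (q 1) (mul (q 2) (q 0)) = 0
    rw [hcyc, hcyc, h0]
  · show B (q 2) (mul (q 0) (q 1)) = 0
    rw [hcyc, h0]

end SymmetricComposition

/-- Paper subscripts `1, 2, 3` are encoded as `1, 2, 0 : Fin 3`. -/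
theorem two_dim_triality_solutions_general
    (F : Type*) [Field F]
    (A : Type*) [AddCommGroup A] [Module F A]
    (mul : A →ₗ[F] A →ₗ[F] A)
    (B : LinearMap.BilinForm F A)
    (hBsymm : ∀ x y : A, B x y = B y x)
    (hcomp₁ : ∀ x y : A, mul (mul x y) x = B x x • y)
    (hcomp₂ : ∀ x y : A, mul x (mul y x) = B x x • y)
    (hassoc : ∀ x y z : A, B (mul x y) z = B x (mul y z)) :
    -- Forward direction
    (∀ q p : Fin 3 → A,
      (∀ j : Fin 3, B (q j) (q j) = 1) →
      B (q 0) (mul (q 1) (q 2)) = 0 →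
      (∀ j : Fin 3, p j = -(mul (q (j + 1)) (q (j + 2)))) →
      ∀ j : Fin 3,
        mul (p (j + 1)) (p (j + 2)) = p j ∧
        mul (p (j + 1)) (q (j + 2)) = -(q j) ∧
        mul (q (j + 1)) (p (j + 2)) = -(q j) ∧
        mul (q (j + 1)) (q (j + 2)) = -(p j) ∧
        B (p j) (p j) = 1 ∧
        B (p j) (q j) = 0) ∧
    -- Converse direction
    (∀ q p : Fin 3 → A,
      (∀ j : Fin 3, B (q j) (q j) = 1) →
      (∀ j : Fin 3,
        mul (p (j + 1)) (p (j + 2)) = p j ∧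
        mul (p (j + 1)) (q (j + 2)) = -(q j) ∧
        mul (q (j + 1)) (p (j + 2)) = -(q j) ∧
        mul (q (j + 1)) (q (j + 2)) = -(p j) ∧
        B (p j) (p j) = 1 ∧
        B (p j) (q j) = 0) →
      B (q 0) (mul (q 1) (q 2)) = 0) := by
  refine ⟨fun q p hq h0 hp j => ?_, fun q p _ hrel => ?_⟩
  · have horth := bilin_mul_eq_zero_rotate hBsymm hassoc h0 j
    have hp₁ : p (j + 1) = -mul (q (j + 2)) (q j) := by
      simpa [add_assoc] using hp (j + 1)
    have hp₂ : p (j + 2) = -mul (q j) (q (j + 1)) := by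
      simpa [add_assoc] using hp (j + 2)
    simp only [hp₁, hp₂, hp j, map_neg, LinearMap.neg_apply, neg_neg, neg_eq_zero,
      hcomp₁, hcomp₂, hq, one_smul, bilin_mul_self_mul hcomp₂ hassoc, one_mul, true_and]
    refine ⟨mul_mul_mul_of_bilin_mul_eq_zero hBsymm hcomp₂ hassoc (hq j) horth, ?_⟩
    rw [hassoc, ← bilin_mul_cyclic hBsymm hassoc, horth]
  · obtain ⟨-, -, -, hqq, -, hpq⟩ := hrel 0
    simp only [zero_add] at hqq hpq
    rw [hqq, map_neg, hBsymm, hpq, neg_zero]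

/-- Proposition 2.3.  In the 2-dimensional symmetric
composition algebra with basis `e, f`, the triples `(p_j, q_j)` solving
Eqs. (2.11)–(2.12) are exactly those with `⟨q_j|q_j⟩ = 1`, `⟨q₃|q₁q₂⟩ = 0` and
`p_j = −q_{j+1}q_{j+2}`.  Paper subscripts `1, 2, 3` are encoded as
`1, 2, 0 : Fin 3` (so `q₃ = q 0`, `q₁ = q 1`, `q₂ = q 2`). -/
theorem two_dim_triality_solutions
    (F : Type*) [Field F] (h2 : (2 : F) ≠ 0)
    (A : Type*) [AddCommGroup A] [Module F A]
    (mul : A →ₗ[F] A →ₗ[F] A)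
    (B : LinearMap.BilinForm F A)
    (hBsymm : ∀ x y : A, B x y = B y x)
    (hBnd : B.Nondegenerate)
    (e f : A)
    (hspan : ∀ x : A, ∃ α β : F, x = α • e + β • f)
    (hee : mul e e = e) (hff : mul f f = -e)
    (hef : mul e f = -f) (hfe : mul f e = -f)
    (hBee : B e e = 1) (hBff : B f f = 1)
    (hBef : B e f = 0) (hBfe : B f e = 0)
    (hcomp₁ : ∀ x y : A, mul (mul x y) x = B x x • y)
    (hcomp₂ : ∀ x y : A, mul x (mul y x) = B x x • y)
    (hassoc : ∀ x y z : A, B (mul x y) z = B x (mul y z)) :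
    -- Forward direction
    (∀ q p : Fin 3 → A,
      (∀ j : Fin 3, B (q j) (q j) = 1) →
      B (q 0) (mul (q 1) (q 2)) = 0 →
      (∀ j : Fin 3, p j = -(mul (q (j + 1)) (q (j + 2)))) →
      ∀ j : Fin 3,
        mul (p (j + 1)) (p (j + 2)) = p j ∧
        mul (p (j + 1)) (q (j + 2)) = -(q j) ∧
        mul (q (j + 1)) (p (j + 2)) = -(q j) ∧
        mul (q (j + 1)) (q (j + 2)) = -(p j) ∧
        B (p j) (p j) = 1 ∧
        B (p j) (q j) = 0) ∧
    -- Converse direction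
    (∀ q p : Fin 3 → A,
      (∀ j : Fin 3, B (q j) (q j) = 1) →
      (∀ j : Fin 3,
        mul (p (j + 1)) (p (j + 2)) = p j ∧
        mul (p (j + 1)) (q (j + 2)) = -(q j) ∧
        mul (q (j + 1)) (p (j + 2)) = -(q j) ∧
        mul (q (j + 1)) (q (j + 2)) = -(p j) ∧
        B (p j) (p j) = 1 ∧
        B (p j) (q j) = 0) →
      B (q 0) (mul (q 1) (q 2)) = 0) :=
  two_dim_triality_solutions_general F A mul B hBsymm hcomp₁ hcomp₂ hassoc
end

section
/- Let A be a symmetric composition algebra over a field F of characteristic ≠ 2, and let a = (a₁, a₂, a₃) ∈ Σ. Then for all x, y ∈ A and all j = 1, 2, 3 (indices modulo 3): σ_j(a)(xy) = (σ_{j+1}(a)x)(σ_{j+2}(a)y) and θ_j(a)(xy) = (θ_{j+1}(a)x)(θ_{j+2}(a)y); in particular both triples (σ₁(a), σ₂(a), σ₃(a)) and (θ₁(a), θ₂(a), θ₃(a)) satisfy the global triality relation. -/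
/-!
Linearizing `(xy)x = x(yx) = ⟨x|x⟩y` gives `(xy)z + (zy)x = x(yz) + z(yx) = 2⟨x|z⟩y`.
Expanding `((x aⱼ) a_{j+2}) ((y a_{j+1}) aⱼ)` with these identities and the multiplication
table of `a` yields `((xy) a_{j+2}) a_{j+1}`, which is the `σ`-identity. The `θ`-identity is the
`σ`-identity of the opposite algebra `x ∘ y = yx`, which satisfies the same identities, applied
to the reversed triple.
-/

/-- `σ_j(a) x = (x a_{j+2}) a_{j+1}` (paper Eq. (2.29a)). -/
def sigmaMap {F A : Type*} [Field F] [AddCommGroup A] [Module F A]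
    (mul : A →ₗ[F] A →ₗ[F] A) (a : Fin 3 → A) (j : Fin 3) (x : A) : A :=
  mul (mul x (a (j + 2))) (a (j + 1))

/-- `θ_j(a) x = a_{j+2} (a_{j+1} x)` (paper Eq. (2.29b)). -/
def thetaMap {F A : Type*} [Field F] [AddCommGroup A] [Module F A]
    (mul : A →ₗ[F] A →ₗ[F] A) (a : Fin 3 → A) (j : Fin 3) (x : A) : A :=
  mul (a (j + 2)) (mul (a (j + 1)) x)

structure SymmetricCompositionIdentities {F A : Type*} [Field F] [AddCommGroup A] [Module F A]
    (mul : A →ₗ[F] A →ₗ[F] A) (B : LinearMap.BilinForm F A) : Prop where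
  symm : ∀ x y : A, B x y = B y x
  mul_mul_self : ∀ x y : A, mul (mul x y) x = B x x • y
  self_mul_mul : ∀ x y : A, mul x (mul y x) = B x x • y
  assoc : ∀ x y z : A, B (mul x y) z = B x (mul y z)

namespace SymmetricCompositionIdentities

variable {F A : Type*} [Field F] [AddCommGroup A] [Module F A]
  {mul : A →ₗ[F] A →ₗ[F] A} {B : LinearMap.BilinForm F A}

theorem flip (hA : SymmetricCompositionIdentities mul B) :
    SymmetricCompositionIdentities mul.flip B where
  symm := hA.symm
  mul_mul_self := hA.self_mul_mul
  self_mul_mul := hA.mul_mul_self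
  assoc x y z :=
    calc B (mul y x) z = B z (mul y x) := hA.symm _ _
      _ = B (mul z y) x := (hA.assoc z y x).symm
      _ = B x (mul z y) := hA.symm _ _

theorem mul_mul_add_mul_mul_left (hA : SymmetricCompositionIdentities mul B) (x y z : A) :
    mul (mul x y) z + mul (mul z y) x = (2 * B x z) • y := by
  have h := hA.mul_mul_self (x + z) y
  simp only [map_add, LinearMap.add_apply] at h
  rw [hA.symm z x] at h
  linear_combination (norm := module) h - hA.mul_mul_self x y - hA.mul_mul_self z y

theorem mul_mul_add_mul_mul_right (hA : SymmetricCompositionIdentities mul B) (x y z : A) :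
    mul x (mul y z) + mul z (mul y x) = (2 * B x z) • y := by
  have h := hA.self_mul_mul (x + z) y
  simp only [map_add, LinearMap.add_apply] at h
  rw [hA.symm z x] at h
  linear_combination (norm := module) h - hA.self_mul_mul x y - hA.self_mul_mul z y

theorem sigma_triality (hA : SymmetricCompositionIdentities mul B) {p b c : A}
    (hpb : mul p b = c) (hbc : mul b c = p) (hcp : mul c p = b) (hb : B b b = 1) (x y : A) :
    mul (mul (mul x y) c) b = mul (mul (mul x p) c) (mul (mul y b) p) := by
  have hxpc : mul (mul x p) c = (2 * B x c) • p - mul b x := by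
    rw [← hcp, ← hA.mul_mul_add_mul_mul_left]; abel
  have hybp : mul (mul y b) p = (2 * B y p) • b - mul c y := by
    rw [← hpb, ← hA.mul_mul_add_mul_mul_left]; abel
  have hpcy : mul p (mul c y) = (2 * B y p) • c - mul y b := by
    rw [← hcp, hA.symm y, ← hA.mul_mul_add_mul_mul_right]; abel
  have hbxb : mul (mul b x) b = x := by
    rw [hA.mul_mul_self, hb, one_smul]
  have hcyb : B (mul c y) b = B y p := by
    rw [hA.assoc, hA.symm, hA.assoc, hbc]
  have hlhs : mul (mul (mul x y) c) b =
      (2 * B x c) • mul y b - (2 * B y p) • x + mul (mul b x) (mul c y) := by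
    have hxyc := congrArg (mul · b) (hA.mul_mul_add_mul_mul_left x y c)
    have hcyxb := hA.mul_mul_add_mul_mul_left (mul c y) x b
    simp only [map_add, map_smul, LinearMap.add_apply, LinearMap.smul_apply] at hxyc
    rw [hcyb] at hcyxb
    linear_combination (norm := module) hxyc - hcyxb
  rw [hlhs, hxpc, hybp]
  simp only [map_sub, map_smul, LinearMap.sub_apply, LinearMap.smul_apply]
  rw [hpb, hpcy, hbxb]
  module

theorem theta_triality (hA : SymmetricCompositionIdentities mul B) {p b c : A}
    (hpb : mul p b = c) (hbc : mul b c = p) (hcp : mul c p = b) (hc : B c c = 1) (x y : A) :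
    mul c (mul b (mul x y)) = mul (mul p (mul c x)) (mul b (mul p y)) := by
  simpa only [LinearMap.flip_apply] using hA.flip.sigma_triality hcp hbc hpb hc y x

end SymmetricCompositionIdentities

open SymmetricCompositionIdentities in
theorem sigma_theta_global_triality_general
    (F : Type*) [Field F]
    (A : Type*) [AddCommGroup A] [Module F A]
    (mul : A →ₗ[F] A →ₗ[F] A)
    (B : LinearMap.BilinForm F A)
    (hBsymm : ∀ x y : A, B x y = B y x)
    (hcomp₁ : ∀ x y : A, mul (mul x y) x = B x x • y)
    (hcomp₂ : ∀ x y : A, mul x (mul y x) = B x x • y)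
    (hassoc : ∀ x y z : A, B (mul x y) z = B x (mul y z))
    (a : Fin 3 → A)
    (hSig : ∀ j : Fin 3, mul (a j) (a (j + 1)) = a (j + 2) ∧ B (a j) (a j) = 1) :
    ∀ (j : Fin 3) (x y : A),
      sigmaMap mul a j (mul x y) =
        mul (sigmaMap mul a (j + 1) x) (sigmaMap mul a (j + 2) y) ∧
      thetaMap mul a j (mul x y) =
        mul (thetaMap mul a (j + 1) x) (thetaMap mul a (j + 2) y) := by
  intro j x y
  have hA : SymmetricCompositionIdentities mul B := ⟨hBsymm, hcomp₁, hcomp₂, hassoc⟩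
  obtain ⟨e₁, e₂, e₃, e₄⟩ : j + 1 + 1 = j + 2 ∧ j + 1 + 2 = j ∧ j + 2 + 1 = j ∧
      j + 2 + 2 = j + 1 := by omega
  have hbc := (hSig (j + 1)).1
  have hcp := (hSig (j + 2)).1
  rw [e₁, e₂] at hbc
  rw [e₃, e₄] at hcp
  simp only [sigmaMap, thetaMap, e₁, e₂, e₃, e₄]
  exact ⟨sigma_triality hA (hSig j).1 hbc hcp (hSig (j + 1)).2 x y,
    theta_triality hA (hSig j).1 hbc hcp (hSig (j + 2)).2 x y⟩

/-- parts (i), (ii) of Theorem 2.5.  For `a ∈ Σ` the triples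
`σ(a)` and `θ(a)` satisfy the global triality relation.  Paper subscripts
`1, 2, 3` are encoded as `1, 2, 0 : Fin 3`. -/
theorem sigma_theta_global_triality
    (F : Type*) [Field F] (h2 : (2 : F) ≠ 0)
    (A : Type*) [AddCommGroup A] [Module F A]
    (mul : A →ₗ[F] A →ₗ[F] A)
    (B : LinearMap.BilinForm F A)
    (hBsymm : ∀ x y : A, B x y = B y x)
    (hBnd : B.Nondegenerate)
    (hcomp₁ : ∀ x y : A, mul (mul x y) x = B x x • y)
    (hcomp₂ : ∀ x y : A, mul x (mul y x) = B x x • y)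
    (hmult : ∀ x y : A, B (mul x y) (mul x y) = B x x * B y y)
    (hassoc : ∀ x y z : A, B (mul x y) z = B x (mul y z))
    (a : Fin 3 → A)
    (hSig : ∀ j : Fin 3, mul (a j) (a (j + 1)) = a (j + 2) ∧ B (a j) (a j) = 1) :
    ∀ (j : Fin 3) (x y : A),
      sigmaMap mul a j (mul x y) =
        mul (sigmaMap mul a (j + 1) x) (sigmaMap mul a (j + 2) y) ∧
      thetaMap mul a j (mul x y) =
        mul (thetaMap mul a (j + 1) x) (thetaMap mul a (j + 2) y) :=
  sigma_theta_global_triality_general F A mul B hBsymm hcomp₁ hcomp₂ hassoc a hSig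
end

section
/- Let A be a symmetric composition algebra over a field F of characteristic ≠ 2, and let a = (a₁, a₂, a₃) ∈ Σ. Then for all j = 1, 2, 3 (indices modulo 3): σ_j(a) ∘ θ_j(a) = θ_j(a) ∘ σ_j(a) = Id, and θ_j(a) ∘ θ_{j+1}(a) ∘ θ_{j+2}(a) = σ_{j+2}(a) ∘ σ_{j+1}(a) ∘ σ_j(a) = Id; in the course of the proof one also has σ_{j+2}(a) ∘ σ_{j+1}(a) = θ_j(a). -/
section Polarization

variable {R M : Type*} [CommRing R] [AddCommGroup M] [Module R M]
  {mul : M →ₗ[R] M →ₗ[R] M} {B : LinearMap.BilinForm R M}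

theorem comp₁_polarized (hBsymm : ∀ x y, B x y = B y x)
    (hcomp₁ : ∀ x y, mul (mul x y) x = B x x • y) (x y z : M) :
    mul (mul x y) z + mul (mul z y) x = (2 * B x z) • y := by
  have h := hcomp₁ (x + z) y
  simp only [map_add, LinearMap.add_apply, hcomp₁ x y, hcomp₁ z y, hBsymm z x] at h
  linear_combination (norm := module) h

theorem comp₂_polarized (hBsymm : ∀ x y, B x y = B y x)
    (hcomp₂ : ∀ x y, mul x (mul y x) = B x x • y) (x y z : M) :
    mul x (mul y z) + mul z (mul y x) = (2 * B x z) • y := by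
  have h := hcomp₂ (x + z) y
  simp only [map_add, LinearMap.add_apply, hcomp₂ x y, hcomp₂ z y, hBsymm z x] at h
  linear_combination (norm := module) h

end Polarization

theorem Fin.three_add_one_add_one (j : Fin 3) : j + 1 + 1 = j + 2 := by
  rw [add_assoc]; rfl

theorem Fin.three_add_one_add_two (j : Fin 3) : j + 1 + 2 = j := by
  rw [add_assoc]; exact add_zero j

theorem Fin.three_add_two_add_one (j : Fin 3) : j + 2 + 1 = j := by
  rw [add_assoc]; exact add_zero j

theorem Fin.three_add_two_add_two (j : Fin 3) : j + 2 + 2 = j + 1 := by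
  rw [add_assoc]; rfl

section Sigma

variable {F A : Type*} [Field F] [AddCommGroup A] [Module F A]
  {mul : A →ₗ[F] A →ₗ[F] A} {B : LinearMap.BilinForm F A} {a : Fin 3 → A}

/-- The set `Σ` of the paper, with its indices `1, 2, 3` read modulo `3`. -/
def IsSigmaTriple (mul : A →ₗ[F] A →ₗ[F] A) (B : LinearMap.BilinForm F A) (a : Fin 3 → A) :
    Prop :=
  ∀ j : Fin 3, mul (a j) (a (j + 1)) = a (j + 2) ∧ B (a j) (a j) = 1

namespace IsSigmaTriple

theorem mul_eq (ha : IsSigmaTriple mul B a) (j : Fin 3) : mul (a j) (a (j + 1)) = a (j + 2) :=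
  (ha j).1

theorem norm_eq (ha : IsSigmaTriple mul B a) (j : Fin 3) : B (a j) (a j) = 1 :=
  (ha j).2

theorem mul_succ_eq (ha : IsSigmaTriple mul B a) (j : Fin 3) :
    mul (a (j + 1)) (a (j + 2)) = a j := by
  simpa only [Fin.three_add_one_add_one, Fin.three_add_one_add_two] using ha.mul_eq (j + 1)

theorem mul_pred_eq (ha : IsSigmaTriple mul B a) (j : Fin 3) :
    mul (a (j + 2)) (a j) = a (j + 1) := by
  simpa only [Fin.three_add_two_add_one, Fin.three_add_two_add_two] using ha.mul_eq (j + 2)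

end IsSigmaTriple

theorem sigmaMap_thetaMap (hcomp₁ : ∀ x y, mul (mul x y) x = B x x • y)
    (ha : IsSigmaTriple mul B a) (j : Fin 3) (x : A) :
    sigmaMap mul a j (thetaMap mul a j x) = x := by
  simp only [sigmaMap, thetaMap, hcomp₁, ha.norm_eq, one_smul]

theorem thetaMap_sigmaMap (hcomp₂ : ∀ x y, mul x (mul y x) = B x x • y)
    (ha : IsSigmaTriple mul B a) (j : Fin 3) (x : A) :
    thetaMap mul a j (sigmaMap mul a j x) = x := by
  simp only [sigmaMap, thetaMap, hcomp₂, ha.norm_eq, one_smul]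

theorem sigmaMap_sigmaMap (hBsymm : ∀ x y, B x y = B y x)
    (hcomp₁ : ∀ x y, mul (mul x y) x = B x x • y) (hcomp₂ : ∀ x y, mul x (mul y x) = B x x • y)
    (hassoc : ∀ x y z, B (mul x y) z = B x (mul y z)) (ha : IsSigmaTriple mul B a)
    (j : Fin 3) (x : A) :
    sigmaMap mul a (j + 2) (sigmaMap mul a (j + 1) x) = thetaMap mul a j x := by
  have hσσ : sigmaMap mul a (j + 2) (sigmaMap mul a (j + 1) x) =
      (2 * B x (a (j + 2))) • a (j + 1) - mul x (a j) := by
    simp only [sigmaMap, Fin.three_add_one_add_one, Fin.three_add_one_add_two,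
      Fin.three_add_two_add_one, Fin.three_add_two_add_two]
    rw [eq_sub_of_add_eq (comp₁_polarized hBsymm hcomp₁ (mul x (a j)) (a (j + 2)) (a (j + 1))),
      ha.mul_succ_eq, map_sub, LinearMap.sub_apply, map_smul, LinearMap.smul_apply,
      ha.mul_pred_eq, hcomp₁, ha.norm_eq, one_smul, hassoc, ha.mul_eq]
  have hθ : thetaMap mul a j x = (2 * B x (a (j + 2))) • a (j + 1) - mul x (a j) := by
    rw [thetaMap, eq_sub_of_add_eq (comp₂_polarized hBsymm hcomp₂ (a (j + 2)) (a (j + 1)) x),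
      ha.mul_succ_eq, hBsymm]
  rw [hσσ, hθ]

theorem thetaMap_thetaMap (hBsymm : ∀ x y, B x y = B y x)
    (hcomp₁ : ∀ x y, mul (mul x y) x = B x x • y) (hcomp₂ : ∀ x y, mul x (mul y x) = B x x • y)
    (hassoc : ∀ x y z, B (mul x y) z = B x (mul y z)) (ha : IsSigmaTriple mul B a)
    (j : Fin 3) (x : A) :
    thetaMap mul a (j + 1) (thetaMap mul a (j + 2) x) = sigmaMap mul a j x := by
  rw [← sigmaMap_sigmaMap hBsymm hcomp₁ hcomp₂ hassoc ha (j + 1), Fin.three_add_one_add_two,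
    Fin.three_add_one_add_one, sigmaMap_thetaMap hcomp₁ ha]

end Sigma

theorem sigma_theta_inverses_general
    (F : Type*) [Field F]
    (A : Type*) [AddCommGroup A] [Module F A]
    (mul : A →ₗ[F] A →ₗ[F] A)
    (B : LinearMap.BilinForm F A)
    (hBsymm : ∀ x y : A, B x y = B y x)
    (hcomp₁ : ∀ x y : A, mul (mul x y) x = B x x • y)
    (hcomp₂ : ∀ x y : A, mul x (mul y x) = B x x • y)
    (hassoc : ∀ x y z : A, B (mul x y) z = B x (mul y z))
    (a : Fin 3 → A)
    (hSig : ∀ j : Fin 3, mul (a j) (a (j + 1)) = a (j + 2) ∧ B (a j) (a j) = 1) :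
    ∀ (j : Fin 3) (x : A),
      sigmaMap mul a j (thetaMap mul a j x) = x ∧
      thetaMap mul a j (sigmaMap mul a j x) = x ∧
      thetaMap mul a j (thetaMap mul a (j + 1) (thetaMap mul a (j + 2) x)) = x ∧
      sigmaMap mul a (j + 2) (sigmaMap mul a (j + 1) (sigmaMap mul a j x)) = x ∧
      sigmaMap mul a (j + 2) (sigmaMap mul a (j + 1) x) = thetaMap mul a j x := by
  have ha : IsSigmaTriple mul B a := hSig
  have hσσ := sigmaMap_sigmaMap hBsymm hcomp₁ hcomp₂ hassoc ha
  intro j x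
  refine ⟨sigmaMap_thetaMap hcomp₁ ha j x, thetaMap_sigmaMap hcomp₂ ha j x, ?_, ?_, hσσ j x⟩
  · rw [thetaMap_thetaMap hBsymm hcomp₁ hcomp₂ hassoc ha, thetaMap_sigmaMap hcomp₂ ha]
  · rw [hσσ, thetaMap_sigmaMap hcomp₂ ha]

/-- parts (iii), (iv) of Theorem 2.5.  For `a ∈ Σ`:
`σ_j(a)θ_j(a) = θ_j(a)σ_j(a) = Id`,
`θ_j(a)θ_{j+1}(a)θ_{j+2}(a) = σ_{j+2}(a)σ_{j+1}(a)σ_j(a) = Id`, and moreover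
`σ_{j+2}(a)σ_{j+1}(a) = θ_j(a)`.  Paper subscripts `1, 2, 3` are encoded as
`1, 2, 0 : Fin 3`. -/
theorem sigma_theta_inverses
    (F : Type*) [Field F] (h2 : (2 : F) ≠ 0)
    (A : Type*) [AddCommGroup A] [Module F A]
    (mul : A →ₗ[F] A →ₗ[F] A)
    (B : LinearMap.BilinForm F A)
    (hBsymm : ∀ x y : A, B x y = B y x)
    (hBnd : B.Nondegenerate)
    (hcomp₁ : ∀ x y : A, mul (mul x y) x = B x x • y)
    (hcomp₂ : ∀ x y : A, mul x (mul y x) = B x x • y)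
    (hmult : ∀ x y : A, B (mul x y) (mul x y) = B x x * B y y)
    (hassoc : ∀ x y z : A, B (mul x y) z = B x (mul y z))
    (a : Fin 3 → A)
    (hSig : ∀ j : Fin 3, mul (a j) (a (j + 1)) = a (j + 2) ∧ B (a j) (a j) = 1) :
    ∀ (j : Fin 3) (x : A),
      sigmaMap mul a j (thetaMap mul a j x) = x ∧
      thetaMap mul a j (sigmaMap mul a j x) = x ∧
      thetaMap mul a j (thetaMap mul a (j + 1) (thetaMap mul a (j + 2) x)) = x ∧
      sigmaMap mul a (j + 2) (sigmaMap mul a (j + 1) (sigmaMap mul a j x)) = x ∧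
      sigmaMap mul a (j + 2) (sigmaMap mul a (j + 1) x) = thetaMap mul a j x :=
  sigma_theta_inverses_general F A mul B hBsymm hcomp₁ hcomp₂ hassoc a hSig
end

section
/- Let A be a symmetric composition algebra over a field F of characteristic ≠ 2, let a = (a₁, a₂, a₃) ∈ Σ and p = (p₁, p₂, p₃) ∈ Λ(a), and define q_j = a_{j+1} p_{j+2} for j = 1, 2, 3 (indices modulo 3). Then for all j: ⟨q_j | a_j⟩ = 0, a_j q_{j+1} + q_j a_{j+1} = q_{j+2} (so that q = (q₁, q₂, q₃) ∈ Λ(a)), and moreover p_j = q_{j+1} a_{j+2} = q_j − a_{j+1} q_{j+2}. -/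
/-!
Since `x(yx) = (xy)x = ⟨x|x⟩y`, multiplying on both sides by a unit vector `aⱼ` cancels,
which gives `p_j = q_{j+1} a_{j+2}` and `p_j = q_j − a_{j+1} q_{j+2}`. The relation
`a_j q_{j+1} + q_j a_{j+1} = q_{j+2}` uses in addition the linearized law
`x(yx') + x'(yx) = (⟨x|x'⟩ + ⟨x'|x⟩) y` for the orthogonal pair `a_j, p_j`.
-/

namespace SymmetricComposition

variable {R A : Type*} [CommRing R] [AddCommGroup A] [Module R A]
  (mul : A →ₗ[R] A →ₗ[R] A) (B : LinearMap.BilinForm R A)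

theorem mul_mul_add_mul_mul (hflex : ∀ x y : A, mul x (mul y x) = B x x • y) (x x' y : A) :
    mul x (mul y x') + mul x' (mul y x) = (B x x' + B x' x) • y := by
  have h := hflex (x + x') y
  simp only [map_add, LinearMap.add_apply, hflex x y, hflex x' y] at h
  linear_combination (norm := module) h

theorem mul_mul_eq_neg_of_orthogonal (hBsymm : ∀ x y : A, B x y = B y x)
    (hflex : ∀ x y : A, mul x (mul y x) = B x x • y) {x x' : A} (h : B x x' = 0) (y : A) :
    mul x (mul y x') = -mul x' (mul y x) := by
  have key := mul_mul_add_mul_mul mul B hflex x x' y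
  rw [hBsymm x' x, h, add_zero, zero_smul] at key
  exact eq_neg_of_add_eq_zero_left key

theorem bilin_mul_rotate (hBsymm : ∀ x y : A, B x y = B y x)
    (hassoc : ∀ x y z : A, B (mul x y) z = B x (mul y z)) (x y z : A) :
    B (mul y z) x = B (mul x y) z := by
  rw [hBsymm, hassoc]

variable {mul B} {a₁ a₂ a₃ p₁ p₂ p₃ : A}

theorem mul_mul_self_right (hcomp : ∀ x y : A, mul (mul x y) x = B x x • y)
    (ha : B a₁ a₁ = 1) (y : A) : mul (mul a₁ y) a₁ = y := by
  rw [hcomp, ha, one_smul]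

theorem mul_mul_self_left (hflex : ∀ x y : A, mul x (mul y x) = B x x • y)
    (ha : B a₁ a₁ = 1) (y : A) : mul a₁ (mul y a₁) = y := by
  rw [hflex, ha, one_smul]

theorem orthogonal_mul_of_mul_eq (hBsymm : ∀ x y : A, B x y = B y x)
    (hassoc : ∀ x y z : A, B (mul x y) z = B x (mul y z))
    (ha : mul a₁ a₂ = a₃) (hp : B p₃ a₃ = 0) : B (mul a₂ p₃) a₁ = 0 := by
  rw [bilin_mul_rotate mul B hBsymm hassoc, ha, hBsymm, hp]

theorem eq_sub_mul_mul (hflex : ∀ x y : A, mul x (mul y x) = B x x • y)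
    (ha₂ : B a₂ a₂ = 1) (hp : mul a₁ p₂ + mul p₁ a₂ = p₃) :
    p₁ = mul a₂ p₃ - mul a₂ (mul a₁ p₂) := by
  rw [← hp, map_add, mul_mul_self_left hflex ha₂]
  abel

theorem mul_mul_add_mul_mul_eq_mul (hBsymm : ∀ x y : A, B x y = B y x)
    (hcomp : ∀ x y : A, mul (mul x y) x = B x x • y)
    (hflex : ∀ x y : A, mul x (mul y x) = B x x • y)
    (ha₂ : B a₂ a₂ = 1) (ha : mul a₃ a₁ = a₂) (hp : mul a₁ p₂ + mul p₁ a₂ = p₃)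
    (hpa : B a₁ p₁ = 0) :
    mul a₁ (mul a₃ p₁) + mul (mul a₂ p₃) a₂ = mul a₁ p₂ := by
  rw [mul_mul_eq_neg_of_orthogonal mul B hBsymm hflex hpa, ha,
    mul_mul_self_right hcomp ha₂, ← hp]
  abel

end SymmetricComposition

open SymmetricComposition in
-- Paper subscripts `1, 2, 3` are encoded as `1, 2, 0 : Fin 3`.
theorem lambda_q_triple_general
    (F : Type*) [Field F]
    (A : Type*) [AddCommGroup A] [Module F A]
    (mul : A →ₗ[F] A →ₗ[F] A)
    (B : LinearMap.BilinForm F A)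
    (hBsymm : ∀ x y : A, B x y = B y x)
    (hcomp₁ : ∀ x y : A, mul (mul x y) x = B x x • y)
    (hcomp₂ : ∀ x y : A, mul x (mul y x) = B x x • y)
    (hassoc : ∀ x y z : A, B (mul x y) z = B x (mul y z))
    (a : Fin 3 → A)
    (hSig : ∀ j : Fin 3, mul (a j) (a (j + 1)) = a (j + 2) ∧ B (a j) (a j) = 1)
    (p : Fin 3 → A)
    (hLam : ∀ j : Fin 3,
      mul (a j) (p (j + 1)) + mul (p j) (a (j + 1)) = p (j + 2) ∧
      B (p j) (a j) = 0)
    (q : Fin 3 → A)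
    (hq : ∀ j : Fin 3, q j = mul (a (j + 1)) (p (j + 2))) :
    ∀ j : Fin 3,
      B (q j) (a j) = 0 ∧
      mul (a j) (q (j + 1)) + mul (q j) (a (j + 1)) = q (j + 2) ∧
      p j = mul (q (j + 1)) (a (j + 2)) ∧
      p j = q j - mul (a (j + 1)) (q (j + 2)) := by
  have cyc : ∀ i : Fin 3,
      i + 1 + 1 = i + 2 ∧ i + 1 + 2 = i ∧ i + 2 + 1 = i ∧ i + 2 + 2 = i + 1 := by decide
  intro j
  obtain ⟨h11, h12, h21, h22⟩ := cyc j
  have hq₂ : q (j + 1) = mul (a (j + 2)) (p j) := by rw [hq, h11, h12]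
  have hq₃ : q (j + 2) = mul (a j) (p (j + 1)) := by rw [hq, h21, h22]
  have ha₃₁ : mul (a (j + 2)) (a j) = a (j + 1) := by simpa only [h21, h22] using (hSig (j + 2)).1
  have hpa : B (a j) (p j) = 0 := by rw [hBsymm]; exact (hLam j).2
  rw [hq j, hq₂, hq₃]
  exact ⟨orthogonal_mul_of_mul_eq hBsymm hassoc (hSig j).1 (hLam (j + 2)).2,
    mul_mul_add_mul_mul_eq_mul hBsymm hcomp₁ hcomp₂ (hSig (j + 1)).2 ha₃₁ (hLam j).1 hpa,
    (mul_mul_self_right hcomp₁ (hSig (j + 2)).2 _).symm,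
    eq_sub_mul_mul hcomp₂ (hSig (j + 1)).2 (hLam j).1⟩

/-- Lemma 3.1.  For `a ∈ Σ`, `p ∈ Λ(a)` and
`q_j = a_{j+1} p_{j+2}`, one has `⟨q_j|a_j⟩ = 0`,
`a_j q_{j+1} + q_j a_{j+1} = q_{j+2}` (so `q ∈ Λ(a)`), and conversely
`p_j = q_{j+1} a_{j+2} = q_j − a_{j+1} q_{j+2}`.  Paper subscripts `1, 2, 3`
are encoded as `1, 2, 0 : Fin 3`. -/
theorem lambda_q_triple
    (F : Type*) [Field F] (h2 : (2 : F) ≠ 0)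
    (A : Type*) [AddCommGroup A] [Module F A]
    (mul : A →ₗ[F] A →ₗ[F] A)
    (B : LinearMap.BilinForm F A)
    (hBsymm : ∀ x y : A, B x y = B y x)
    (hBnd : B.Nondegenerate)
    (hcomp₁ : ∀ x y : A, mul (mul x y) x = B x x • y)
    (hcomp₂ : ∀ x y : A, mul x (mul y x) = B x x • y)
    (hmult : ∀ x y : A, B (mul x y) (mul x y) = B x x * B y y)
    (hassoc : ∀ x y z : A, B (mul x y) z = B x (mul y z))
    (a : Fin 3 → A)
    (hSig : ∀ j : Fin 3, mul (a j) (a (j + 1)) = a (j + 2) ∧ B (a j) (a j) = 1)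
    (p : Fin 3 → A)
    (hLam : ∀ j : Fin 3,
      mul (a j) (p (j + 1)) + mul (p j) (a (j + 1)) = p (j + 2) ∧
      B (p j) (a j) = 0)
    (q : Fin 3 → A)
    (hq : ∀ j : Fin 3, q j = mul (a (j + 1)) (p (j + 2))) :
    ∀ j : Fin 3,
      B (q j) (a j) = 0 ∧
      mul (a j) (q (j + 1)) + mul (q j) (a (j + 1)) = q (j + 2) ∧
      p j = mul (q (j + 1)) (a (j + 2)) ∧
      p j = q j - mul (a (j + 1)) (q (j + 2)) :=
  lambda_q_triple_general F A mul B hBsymm hcomp₁ hcomp₂ hassoc a hSig p hLam q hq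
end

section
/- Let A be a symmetric composition algebra over a field F of characteristic ≠ 2, let a = (a₁, a₂, a₃) ∈ Σ and p = (p₁, p₂, p₃) ∈ Λ(a), set q_j = a_{j+1} p_{j+2}, and define D_j(a,p) ∈ End_F(A) by D_j(a,p)x = (p_{j+1}x)a_{j+1} + a_j(x q_j) for j = 1, 2, 3 (indices modulo 3). Then the local triality relation holds: D_j(a,p)(xy) = (D_{j+1}(a,p)x)y + x(D_{j+2}(a,p)y) for all x, y ∈ A and all j = 1, 2, 3. -/
/-!
For `u, v ∈ A` the triple `t_{u,v} = (σ, τ₁, τ₂)` with `σ x = 2⟨u|x⟩v - 2⟨v|x⟩u`,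
`τ₁ x = ⟨u|v⟩x - (vx)u` and `τ₂ x = ⟨u|v⟩x - u(xv)` is a local triality, and so are its
cyclic rotations: if `d₀` and `d₂` are skew and `d₀(xy) = (d₁x)y + x(d₂y)`, then nondegeneracy and
associativity of the form give `d₂(xy) = (d₀x)y + x(d₁y)`.  Since `p_{j+1} ⟂ a_{j+1}` and
`q_j ⟂ a_j`, the map `D_j` is minus the sum of `τ₁` for `(a_{j+1}, p_{j+1})` and `τ₂` for
`(a_j, q_j)`.  Adding the two rotated trialities writes `D_j(xy)` as `(D'x)y + x(D''y)`, and the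
relations defining `Σ` and `Λ(a)` identify `D'` with `D_{j+1}` and `D''` with `D_{j+2}`.
-/

section

variable {F A : Type*} [Field F] [AddCommGroup A] [Module F A]

structure IsSymmetricComposition (mul : A →ₗ[F] A →ₗ[F] A) (B : LinearMap.BilinForm F A) :
    Prop where
  symm : ∀ x y, B x y = B y x
  mul_mul_left : ∀ x y, mul (mul x y) x = B x x • y
  mul_mul_right : ∀ x y, mul x (mul y x) = B x x • y
  assoc : ∀ x y z, B (mul x y) z = B x (mul y z)

def IsLocalTriality (mul : A →ₗ[F] A →ₗ[F] A) (d₀ d₁ d₂ : A → A) : Prop :=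
  ∀ x y, d₀ (mul x y) = mul (d₁ x) y + mul x (d₂ y)

def IsSkew (B : LinearMap.BilinForm F A) (d : A → A) : Prop :=
  ∀ x z, B (d x) z = -B x (d z)

def sigma (B : LinearMap.BilinForm F A) (u v x : A) : A :=
  (2 * B u x) • v - (2 * B v x) • u

def tau₁ (mul : A →ₗ[F] A →ₗ[F] A) (B : LinearMap.BilinForm F A) (u v x : A) : A :=
  B u v • x - mul (mul v x) u

def tau₂ (mul : A →ₗ[F] A →ₗ[F] A) (B : LinearMap.BilinForm F A) (u v x : A) : A :=
  B u v • x - mul u (mul x v)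

theorem isSkew_sigma {B : LinearMap.BilinForm F A} (hsymm : ∀ x y, B x y = B y x) (u v : A) :
    IsSkew B (sigma B u v) := by
  intro x z
  simp only [sigma, map_sub, map_smul, LinearMap.sub_apply, LinearMap.smul_apply, smul_eq_mul]
  linear_combination (2 * B v z) * hsymm u x - (2 * B u z) * hsymm v x

theorem IsLocalTriality.rotate {mul : A →ₗ[F] A →ₗ[F] A} {B : LinearMap.BilinForm F A}
    (hB : B.Nondegenerate) (hassoc : ∀ x y z, B (mul x y) z = B x (mul y z))
    {d₀ d₁ d₂ : A → A} (h₀ : IsSkew B d₀) (h₂ : IsSkew B d₂)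
    (ht : IsLocalTriality mul d₀ d₁ d₂) : IsLocalTriality mul d₂ d₀ d₁ := by
  intro x y
  rw [← sub_eq_zero]
  refine hB.1 _ fun z => ?_
  have hyz : mul y (d₂ z) = d₀ (mul y z) - mul (d₁ y) z := by
    rw [ht y z]; abel
  have key : B (d₂ (mul x y)) z = B (mul (d₀ x) y) z + B (mul x (d₁ y)) z := by
    rw [h₂, hassoc, hyz, map_sub, hassoc, hassoc]
    linear_combination -h₀ x (mul y z)
  simp only [map_sub, map_add, LinearMap.sub_apply, LinearMap.add_apply, key, sub_self]

namespace IsSymmetricComposition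

variable {mul : A →ₗ[F] A →ₗ[F] A} {B : LinearMap.BilinForm F A}

theorem flip (h : IsSymmetricComposition mul B) : IsSymmetricComposition mul.flip B where
  symm := h.symm
  mul_mul_left := h.mul_mul_right
  mul_mul_right := h.mul_mul_left
  assoc x y z := by
    simp only [LinearMap.flip_apply]
    rw [h.symm, ← h.assoc, h.symm, ← h.assoc]

theorem mul_mul_add_mul_mul (h : IsSymmetricComposition mul B) (x y z : A) :
    mul x (mul y z) + mul z (mul y x) = (2 * B x z) • y := by
  have hxz := h.mul_mul_right (x + z) y
  simp only [map_add, LinearMap.add_apply] at hxz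
  linear_combination (norm := module) hxz - h.mul_mul_right x y - h.mul_mul_right z y
    + h.symm z x • y

theorem mul_mul_add_mul_mul' (h : IsSymmetricComposition mul B) (x y z : A) :
    mul (mul x y) z + mul (mul z y) x = (2 * B x z) • y := by
  rw [add_comm]
  exact h.flip.mul_mul_add_mul_mul x y z

theorem mul_mul_mul_add_mul_mul_mul (h : IsSymmetricComposition mul B) (u v x y : A) :
    mul (mul y u) (mul v x) + mul (mul y v) (mul u x)
      = (2 * B (mul y u) x) • v + (2 * B (mul y v) x) • u - (2 * B u v) • mul x y := by
  have hvu := congrArg (mul x) (h.mul_mul_add_mul_mul v y u)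
  rw [map_add, map_smul] at hvu
  linear_combination (norm := module) h.mul_mul_add_mul_mul (mul y u) v x
    + h.mul_mul_add_mul_mul (mul y v) u x - hvu - (2 : F) • h.symm v u • mul x y

theorem isSkew_tau₂ (h : IsSymmetricComposition mul B) (u v : A) :
    IsSkew B (tau₂ mul B u v) := by
  intro x z
  have hxz : B (mul u (mul x v)) z = B x (mul v (mul z u)) := by
    rw [h.symm (mul u _), ← h.assoc, h.symm (mul z u), h.assoc]
  have hvu := congrArg (B x) (h.mul_mul_add_mul_mul v z u)
  simp only [map_add, map_smul, smul_eq_mul] at hvu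
  simp only [tau₂, map_sub, map_smul, LinearMap.sub_apply, LinearMap.smul_apply, smul_eq_mul]
  linear_combination -hxz - hvu + 2 * B x z * h.symm u v

theorem isLocalTriality_sigma (h : IsSymmetricComposition mul B) (u v : A) :
    IsLocalTriality mul (sigma B u v) (tau₁ mul B u v) (tau₂ mul B u v) := by
  intro x y
  have hl := h.mul_mul_add_mul_mul' (mul v x) u y
  have hr := h.mul_mul_add_mul_mul x u (mul y v)
  have hm := h.mul_mul_mul_add_mul_mul_mul u v x y
  rw [h.assoc] at hl
  rw [← h.assoc, h.symm] at hr
  rw [h.assoc, h.symm y, h.assoc, h.assoc y, h.symm y, h.assoc] at hm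
  simp only [sigma, tau₁, tau₂, map_sub, map_smul, LinearMap.sub_apply, LinearMap.smul_apply]
  linear_combination (norm := module) hl + hr - hm

theorem isLocalTriality_tau₂ (h : IsSymmetricComposition mul B) (hB : B.Nondegenerate)
    (u v : A) :
    IsLocalTriality mul (tau₂ mul B u v) (sigma B u v) (tau₁ mul B u v) :=
  (h.isLocalTriality_sigma u v).rotate hB h.assoc (isSkew_sigma h.symm u v) (h.isSkew_tau₂ u v)

-- `tau₂ mul.flip B u v` is `tau₁ mul B u v` by definition.
theorem isLocalTriality_tau₁ (h : IsSymmetricComposition mul B) (hB : B.Nondegenerate)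
    (u v : A) :
    IsLocalTriality mul (tau₁ mul B u v) (tau₂ mul B u v) (sigma B u v) :=
  (h.isLocalTriality_tau₂ hB u v).rotate hB h.assoc (h.isSkew_tau₂ u v) (h.flip.isSkew_tau₂ u v)

theorem mul_mul_mul_eq_add_sigma (h : IsSymmetricComposition mul B) (w x z u : A) :
    mul w (mul x (mul z u)) = mul (mul z x) (mul u w) + sigma B u (mul w z) x := by
  have hw := h.mul_mul_add_mul_mul w x (mul z u)
  have hm := h.mul_mul_mul_add_mul_mul_mul u x w z
  simp only [sigma, h.assoc w z x, h.symm w (mul z x)]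
  linear_combination (norm := module) hw - hm - (2 : F) • h.symm (mul z u) w • x

theorem mul_mul_mul_eq_add_sigma' (h : IsSymmetricComposition mul B) (w x z u : A) :
    mul (mul (mul u z) x) w = mul (mul w u) (mul x z) + sigma B u (mul z w) x :=
  h.flip.mul_mul_mul_eq_add_sigma w x z u

theorem local_triality (h : IsSymmetricComposition mul B) (hB : B.Nondegenerate)
    {a₁ a₂ a₃ p₁ p₂ p₃ : A} (ha₁ : mul a₁ a₂ = a₃) (ha₂ : mul a₂ a₃ = a₁)
    (hp₁ : mul a₁ p₂ + mul p₁ a₂ = p₃) (hp₃ : mul a₃ p₁ + mul p₃ a₁ = p₂)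
    (hpa₂ : B p₂ a₂ = 0) (hpa₃ : B p₃ a₃ = 0) (x y : A) :
    mul (mul p₂ (mul x y)) a₂ + mul a₁ (mul (mul x y) (mul a₂ p₃))
      = mul (mul (mul p₃ x) a₃ + mul a₂ (mul x (mul a₃ p₁))) y
        + mul x (mul (mul p₁ y) a₁ + mul a₃ (mul y (mul a₁ p₂))) := by
  have hD₂ : mul a₂ (mul x p₂) - sigma B a₁ (mul a₂ p₃) x
      = mul (mul p₃ x) a₃ + mul a₂ (mul x (mul a₃ p₁)) := by
    rw [← hp₃, map_add, map_add, h.mul_mul_mul_eq_add_sigma a₂ x p₃ a₁, ha₁]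
    abel
  have hD₃ : mul (mul (mul a₂ p₃) y) a₁ - sigma B a₂ p₂ y
      = mul (mul p₁ y) a₁ + mul a₃ (mul y (mul a₁ p₂)) := by
    have e₁ := h.mul_mul_mul_eq_add_sigma' a₁ y p₃ a₂
    have e₂ := h.mul_mul_mul_eq_add_sigma a₃ y p₁ a₂
    have e₃ : mul a₃ (mul y p₃)
        = mul a₃ (mul y (mul a₁ p₂)) + mul a₃ (mul y (mul p₁ a₂)) := by
      rw [← hp₁, map_add, map_add]
    have e₄ : sigma B a₂ p₂ y
        = sigma B a₂ (mul a₃ p₁) y + sigma B a₂ (mul p₃ a₁) y := by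
      rw [← hp₃]
      simp only [sigma, map_add, LinearMap.add_apply]
      module
    rw [ha₁] at e₁
    rw [ha₂] at e₂
    linear_combination (norm := module) e₁ + e₃ + e₂ - e₄
  have hap₂ : B a₂ p₂ = 0 := by rw [h.symm, hpa₂]
  have haq₁ : B a₁ (mul a₂ p₃) = 0 := by rw [← h.assoc, ha₁, h.symm, hpa₃]
  have t₁ := h.isLocalTriality_tau₁ hB a₂ p₂ x y
  have t₂ := h.isLocalTriality_tau₂ hB a₁ (mul a₂ p₃) x y
  simp only [tau₁, tau₂, hap₂, haq₁, zero_smul, zero_sub, map_neg, LinearMap.neg_apply] at t₁ t₂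
  rw [← hD₂, ← hD₃, map_sub, LinearMap.sub_apply, map_sub]
  linear_combination (norm := module) -t₁ - t₂

end IsSymmetricComposition

end

theorem D_local_triality_general
    (F : Type*) [Field F]
    (A : Type*) [AddCommGroup A] [Module F A]
    (mul : A →ₗ[F] A →ₗ[F] A)
    (B : LinearMap.BilinForm F A)
    (hBsymm : ∀ x y : A, B x y = B y x)
    (hBnd : B.Nondegenerate)
    (hcomp₁ : ∀ x y : A, mul (mul x y) x = B x x • y)
    (hcomp₂ : ∀ x y : A, mul x (mul y x) = B x x • y)
    (hassoc : ∀ x y z : A, B (mul x y) z = B x (mul y z))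
    (a : Fin 3 → A)
    (hSig : ∀ j : Fin 3, mul (a j) (a (j + 1)) = a (j + 2) ∧ B (a j) (a j) = 1)
    (p : Fin 3 → A)
    (hLam : ∀ j : Fin 3,
      mul (a j) (p (j + 1)) + mul (p j) (a (j + 1)) = p (j + 2) ∧
      B (p j) (a j) = 0)
    (q : Fin 3 → A)
    (hq : ∀ j : Fin 3, q j = mul (a (j + 1)) (p (j + 2)))
    (D : Fin 3 → A → A)
    (hD : ∀ (j : Fin 3) (x : A),
      D j x = mul (mul (p (j + 1)) x) (a (j + 1)) + mul (a j) (mul x (q j))) :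
    ∀ (j : Fin 3) (x y : A),
      D j (mul x y) = mul (D (j + 1) x) y + mul x (D (j + 2) y) := by
  intro j x y
  have h : IsSymmetricComposition mul B := ⟨hBsymm, hcomp₁, hcomp₂, hassoc⟩
  have hidx : ∀ i : Fin 3,
      i + 1 + 1 = i + 2 ∧ i + 1 + 2 = i ∧ i + 2 + 1 = i ∧ i + 2 + 2 = i + 1 := by
    decide
  obtain ⟨e₁₁, e₁₂, e₂₁, e₂₂⟩ := hidx j
  have ha₂ := (hSig (j + 1)).1
  have hp₃ := (hLam (j + 2)).1
  rw [e₁₁, e₁₂] at ha₂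
  rw [e₂₁, e₂₂] at hp₃
  simp only [hD, hq, e₁₁, e₁₂, e₂₁, e₂₂]
  exact h.local_triality hBnd (hSig j).1 ha₂ (hLam j).1 hp₃ (hLam (j + 1)).2 (hLam (j + 2)).2
    x y

/-- Theorem 3.2.  For `a ∈ Σ`, `p ∈ Λ(a)`,
`q_j = a_{j+1} p_{j+2}`, the maps `D_j(a,p)x = (p_{j+1}x)a_{j+1} + a_j(x q_j)`
satisfy the local triality relation
`D_j(a,p)(xy) = (D_{j+1}(a,p)x)y + x(D_{j+2}(a,p)y)`.  Paper subscripts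
`1, 2, 3` are encoded as `1, 2, 0 : Fin 3`. -/
theorem D_local_triality
    (F : Type*) [Field F] (h2 : (2 : F) ≠ 0)
    (A : Type*) [AddCommGroup A] [Module F A]
    (mul : A →ₗ[F] A →ₗ[F] A)
    (B : LinearMap.BilinForm F A)
    (hBsymm : ∀ x y : A, B x y = B y x)
    (hBnd : B.Nondegenerate)
    (hcomp₁ : ∀ x y : A, mul (mul x y) x = B x x • y)
    (hcomp₂ : ∀ x y : A, mul x (mul y x) = B x x • y)
    (hmult : ∀ x y : A, B (mul x y) (mul x y) = B x x * B y y)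
    (hassoc : ∀ x y z : A, B (mul x y) z = B x (mul y z))
    (a : Fin 3 → A)
    (hSig : ∀ j : Fin 3, mul (a j) (a (j + 1)) = a (j + 2) ∧ B (a j) (a j) = 1)
    (p : Fin 3 → A)
    (hLam : ∀ j : Fin 3,
      mul (a j) (p (j + 1)) + mul (p j) (a (j + 1)) = p (j + 2) ∧
      B (p j) (a j) = 0)
    (q : Fin 3 → A)
    (hq : ∀ j : Fin 3, q j = mul (a (j + 1)) (p (j + 2)))
    (D : Fin 3 → A → A)
    (hD : ∀ (j : Fin 3) (x : A),
      D j x = mul (mul (p (j + 1)) x) (a (j + 1)) + mul (a j) (mul x (q j))) :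
    ∀ (j : Fin 3) (x y : A),
      D j (mul x y) = mul (D (j + 1) x) y + mul x (D (j + 2) y) :=
  D_local_triality_general F A mul B hBsymm hBnd hcomp₁ hcomp₂ hassoc a hSig p hLam q hq D hD
end

section
/- Let A be a symmetric composition algebra over a field F of characteristic ≠ 2, let a = (a₁, a₂, a₃) ∈ Σ and p = (p₁, p₂, p₃) ∈ Λ(a), set q_j = a_{j+1} p_{j+2}, and define D_j(a,p)x = (p_{j+1}x)a_{j+1} + a_j(x q_j). Then for all x ∈ A and all j = 1, 2, 3 (indices modulo 3): D_j(a,p)x = 2⟨q_{j+2}|x⟩a_{j+2} − 2⟨a_{j+2}|x⟩q_{j+2} + a_j(x p_j) = 2⟨p_{j+2}|x⟩a_{j+2} − 2⟨a_{j+2}|x⟩p_{j+2} + (q_{j+1}x)a_{j+1}. -/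
/-! Polarizing the composition identities `(xy)x = ⟨x|x⟩y = x(yx)` gives
`(xy)z + (zy)x = 2⟨x|z⟩y = x(yz) + z(yx)`. Both formulas for `D_j(a,p)x` follow by eliminating
`q_j` or `q_{j+1}` through the defining relations of `Λ(a)` and applying these polarized
identities twice, together with `a_{j+2}a_j = a_{j+1}`, `a_ja_{j+1} = a_{j+2}` and
`⟨p_{j+2}|a_{j+2}⟩ = 0`. -/

section CompositionIdentities

variable {R A : Type*} [CommRing R] [AddCommGroup A] [Module R A]
  {mul : A →ₗ[R] A →ₗ[R] A} {B : LinearMap.BilinForm R A}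

theorem mul_mul_add_mul_mul_eq_of_mul_mul_self (hBsymm : ∀ x y : A, B x y = B y x)
    (hcomp : ∀ x y : A, mul (mul x y) x = B x x • y) (x y z : A) :
    mul (mul x y) z + mul (mul z y) x = (2 * B x z) • y := by
  have h := hcomp (x + z) y
  simp only [map_add, LinearMap.add_apply, hcomp, hBsymm z x] at h
  linear_combination (norm := module) h

theorem mul_mul_add_mul_mul_eq_of_mul_self_mul (hBsymm : ∀ x y : A, B x y = B y x)
    (hcomp : ∀ x y : A, mul x (mul y x) = B x x • y) (x y z : A) :
    mul x (mul y z) + mul z (mul y x) = (2 * B x z) • y := by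
  have h := hcomp (x + z) y
  simp only [map_add, LinearMap.add_apply, hcomp, hBsymm z x] at h
  linear_combination (norm := module) h

theorem D_eq_first_alternative (hBsymm : ∀ x y : A, B x y = B y x)
    (hcomp : ∀ x y : A, mul x (mul y x) = B x x • y)
    (hassoc : ∀ x y z : A, B (mul x y) z = B x (mul y z))
    {a₁ a₂ a₃ p₁ p₂ p₃ : A} (ha : mul a₃ a₁ = a₂) (hp : mul a₂ p₃ + mul p₂ a₃ = p₁) (x : A) :
    mul (mul p₂ x) a₂ + mul a₁ (mul x (mul a₂ p₃))
      = (2 * B (mul a₁ p₂) x) • a₃ - (2 * B a₃ x) • mul a₁ p₂ + mul a₁ (mul x p₁) := by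
  have h₁ := mul_mul_add_mul_mul_eq_of_mul_self_mul hBsymm hcomp x p₂ a₃
  have h₂ := mul_mul_add_mul_mul_eq_of_mul_self_mul hBsymm hcomp a₁ a₃ (mul p₂ x)
  rw [ha, ← hassoc] at h₂
  have h₁' := congrArg (mul a₁) h₁
  rw [map_add, map_smul, hBsymm x] at h₁'
  rw [← hp, map_add, map_add]
  linear_combination (norm := module) h₂ - h₁'

theorem D_eq_second_alternative (hBsymm : ∀ x y : A, B x y = B y x)
    (hcomp₁ : ∀ x y : A, mul (mul x y) x = B x x • y)
    (hcomp₂ : ∀ x y : A, mul x (mul y x) = B x x • y)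
    (hassoc : ∀ x y z : A, B (mul x y) z = B x (mul y z))
    {a₁ a₂ a₃ p₁ p₂ p₃ : A} (ha : mul a₁ a₂ = a₃) (hp : mul a₃ p₁ + mul p₃ a₁ = p₂)
    (hpa : B p₃ a₃ = 0) (x : A) :
    mul (mul p₂ x) a₂ + mul a₁ (mul x (mul a₂ p₃))
      = (2 * B p₃ x) • a₃ - (2 * B a₃ x) • p₃ + mul (mul (mul a₃ p₁) x) a₂ := by
  have h₁ := mul_mul_add_mul_mul_eq_of_mul_mul_self hBsymm hcomp₁ (mul p₃ a₁) x a₂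
  rw [hassoc, ha, hpa] at h₁
  have h₂ := mul_mul_add_mul_mul_eq_of_mul_self_mul hBsymm hcomp₂ x a₂ p₃
  have h₃ := mul_mul_add_mul_mul_eq_of_mul_self_mul hBsymm hcomp₂ a₁ p₃ (mul a₂ x)
  rw [← hassoc, ha] at h₃
  have h₂' := congrArg (mul a₁) h₂
  rw [map_add, map_smul, ha, hBsymm x] at h₂'
  rw [← hp, map_add, LinearMap.add_apply, map_add, LinearMap.add_apply]
  linear_combination (norm := module) h₁ + h₂' - h₃

end CompositionIdentities

theorem D_alternative_formulas_general
    (F : Type*) [Field F]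
    (A : Type*) [AddCommGroup A] [Module F A]
    (mul : A →ₗ[F] A →ₗ[F] A)
    (B : LinearMap.BilinForm F A)
    (hBsymm : ∀ x y : A, B x y = B y x)
    (hcomp₁ : ∀ x y : A, mul (mul x y) x = B x x • y)
    (hcomp₂ : ∀ x y : A, mul x (mul y x) = B x x • y)
    (hassoc : ∀ x y z : A, B (mul x y) z = B x (mul y z))
    (a : Fin 3 → A)
    (hSig : ∀ j : Fin 3, mul (a j) (a (j + 1)) = a (j + 2) ∧ B (a j) (a j) = 1)
    (p : Fin 3 → A)
    (hLam : ∀ j : Fin 3,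
      mul (a j) (p (j + 1)) + mul (p j) (a (j + 1)) = p (j + 2) ∧
      B (p j) (a j) = 0)
    (q : Fin 3 → A)
    (hq : ∀ j : Fin 3, q j = mul (a (j + 1)) (p (j + 2)))
    (D : Fin 3 → A → A)
    (hD : ∀ (j : Fin 3) (x : A),
      D j x = mul (mul (p (j + 1)) x) (a (j + 1)) + mul (a j) (mul x (q j))) :
    ∀ (j : Fin 3) (x : A),
      D j x = (2 * B (q (j + 2)) x) • a (j + 2) - (2 * B (a (j + 2)) x) • q (j + 2)
        + mul (a j) (mul x (p j)) ∧
      D j x = (2 * B (p (j + 2)) x) • a (j + 2) - (2 * B (a (j + 2)) x) • p (j + 2)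
        + mul (mul (q (j + 1)) x) (a (j + 1)) := by
  intro j x
  obtain ⟨h₁₁, h₁₂, h₂₁, h₂₂⟩ :
      j + 1 + 1 = j + 2 ∧ j + 1 + 2 = j ∧ j + 2 + 1 = j ∧ j + 2 + 2 = j + 1 := by
    revert j; decide
  have ha₃₁ := (hSig (j + 2)).1
  have hp₁ := (hLam (j + 1)).1
  have hp₂ := (hLam (j + 2)).1
  rw [h₂₁, h₂₂] at ha₃₁ hp₂
  rw [h₁₁, h₁₂] at hp₁
  simp only [hD, hq, h₁₁, h₁₂, h₂₁, h₂₂]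
  exact ⟨D_eq_first_alternative hBsymm hcomp₂ hassoc ha₃₁ hp₁ x,
    D_eq_second_alternative hBsymm hcomp₁ hcomp₂ hassoc (hSig j).1 hp₂ (hLam (j + 2)).2 x⟩

/-- Lemma 3.3.  For `a ∈ Σ`, `p ∈ Λ(a)`,
`q_j = a_{j+1} p_{j+2}` and `D_j(a,p)x = (p_{j+1}x)a_{j+1} + a_j(x q_j)`, one
has the two alternative expressions
`D_j(a,p)x = 2⟨q_{j+2}|x⟩a_{j+2} − 2⟨a_{j+2}|x⟩q_{j+2} + a_j(x p_j)`
`          = 2⟨p_{j+2}|x⟩a_{j+2} − 2⟨a_{j+2}|x⟩p_{j+2} + (q_{j+1}x)a_{j+1}`.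
Paper subscripts `1, 2, 3` are encoded as `1, 2, 0 : Fin 3`. -/
theorem D_alternative_formulas
    (F : Type*) [Field F] (h2 : (2 : F) ≠ 0)
    (A : Type*) [AddCommGroup A] [Module F A]
    (mul : A →ₗ[F] A →ₗ[F] A)
    (B : LinearMap.BilinForm F A)
    (hBsymm : ∀ x y : A, B x y = B y x)
    (hBnd : B.Nondegenerate)
    (hcomp₁ : ∀ x y : A, mul (mul x y) x = B x x • y)
    (hcomp₂ : ∀ x y : A, mul x (mul y x) = B x x • y)
    (hmult : ∀ x y : A, B (mul x y) (mul x y) = B x x * B y y)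
    (hassoc : ∀ x y z : A, B (mul x y) z = B x (mul y z))
    (a : Fin 3 → A)
    (hSig : ∀ j : Fin 3, mul (a j) (a (j + 1)) = a (j + 2) ∧ B (a j) (a j) = 1)
    (p : Fin 3 → A)
    (hLam : ∀ j : Fin 3,
      mul (a j) (p (j + 1)) + mul (p j) (a (j + 1)) = p (j + 2) ∧
      B (p j) (a j) = 0)
    (q : Fin 3 → A)
    (hq : ∀ j : Fin 3, q j = mul (a (j + 1)) (p (j + 2)))
    (D : Fin 3 → A → A)
    (hD : ∀ (j : Fin 3) (x : A),
      D j x = mul (mul (p (j + 1)) x) (a (j + 1)) + mul (a j) (mul x (q j))) :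
    ∀ (j : Fin 3) (x : A),
      D j x = (2 * B (q (j + 2)) x) • a (j + 2) - (2 * B (a (j + 2)) x) • q (j + 2)
        + mul (a j) (mul x (p j)) ∧
      D j x = (2 * B (p (j + 2)) x) • a (j + 2) - (2 * B (a (j + 2)) x) • p (j + 2)
        + mul (mul (q (j + 1)) x) (a (j + 1)) :=
  D_alternative_formulas_general F A mul B hBsymm hcomp₁ hcomp₂ hassoc a hSig p hLam q hq D hD
end

section
/- Let A be a symmetric composition algebra over a field F of characteristic ≠ 2 and let a ∈ A be a nontrivial idempotent: aa = a and ⟨a|a⟩ = 1. Define σ(a), θ(a) ∈ End_F(A) by σ(a)x = (xa)a and θ(a)x = a(ax). Then: (1) σ(a)(xy) = (σ(a)x)(σ(a)y) for all x, y ∈ A; (2) θ(a)(xy) = (θ(a)x)(θ(a)y) for all x, y ∈ A; (3) σ(a)θ(a) = θ(a)σ(a) = Id; (4) (σ(a))³ = (θ(a))³ = Id; (5) ⟨σ(a)x|σ(a)y⟩ = ⟨θ(a)x|θ(a)y⟩ = ⟨x|y⟩ for all x, y ∈ A. In particular, σ(a) and θ(a) are automorphisms of A of order dividing 3. -/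
/-!
With `L = mul a` and `R = mul.flip a`, the identities `(xy)x = x(yx) = ⟨x|x⟩y` at `x = a` give
`L R = R L = 1`, so `θ = L²` and `σ = R²` are mutually inverse, and `R` preserves the form by
associativity of `⟨·|·⟩`. Linearizing at the idempotent gives `σ x = 2⟨x|a⟩a - ax`, from which
`σ² = θ`, hence `σ³ = 1`, and, with one more linearization, `σ(xy) = σ(x)σ(y)`; being inverse to
`σ`, the map `θ` is multiplicative as well.
-/

namespace SymmetricComposition

variable {R A : Type*} [CommRing R] [AddCommGroup A] [Module R A]
  {mul : A →ₗ[R] A →ₗ[R] A} {B : LinearMap.BilinForm R A}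

theorem linearized_comp_left (hBsymm : ∀ x y : A, B x y = B y x)
    (hcomp₁ : ∀ x y : A, mul (mul x y) x = B x x • y) (x y z : A) :
    mul (mul x y) z + mul (mul z y) x = (2 * B x z) • y := by
  have h := hcomp₁ (x + z) y
  simp only [map_add, LinearMap.add_apply] at h
  rw [hBsymm z x] at h
  linear_combination (norm := module) h - hcomp₁ x y - hcomp₁ z y

theorem linearized_comp_right (hBsymm : ∀ x y : A, B x y = B y x)
    (hcomp₂ : ∀ x y : A, mul x (mul y x) = B x x • y) (x y z : A) :
    mul x (mul y z) + mul z (mul y x) = (2 * B x z) • y := by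
  have h := hcomp₂ (x + z) y
  simp only [map_add, LinearMap.add_apply] at h
  rw [hBsymm z x] at h
  linear_combination (norm := module) h - hcomp₂ x y - hcomp₂ z y

variable (mul) in
def sigma (a : A) : A →ₗ[R] A := mul.flip a ∘ₗ mul.flip a

variable (mul) in
def theta (a : A) : A →ₗ[R] A := mul a ∘ₗ mul a

@[simp] theorem sigma_apply (a x : A) : sigma mul a x = mul (mul x a) a := rfl

@[simp] theorem theta_apply (a x : A) : theta mul a x = mul a (mul a x) := rfl

variable {a : A}

theorem mul_mul_left_right (hcomp₁ : ∀ x y : A, mul (mul x y) x = B x x • y)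
    (hnorm : B a a = 1) (y : A) : mul (mul a y) a = y := by
  simpa [hnorm] using hcomp₁ a y

theorem mul_mul_right_left (hcomp₂ : ∀ x y : A, mul x (mul y x) = B x x • y)
    (hnorm : B a a = 1) (y : A) : mul a (mul y a) = y := by
  simpa [hnorm] using hcomp₂ a y

theorem sigma_theta (hcomp₁ : ∀ x y : A, mul (mul x y) x = B x x • y) (hnorm : B a a = 1)
    (x : A) : sigma mul a (theta mul a x) = x := by
  simp only [sigma_apply, theta_apply, mul_mul_left_right hcomp₁ hnorm]

theorem theta_sigma (hcomp₂ : ∀ x y : A, mul x (mul y x) = B x x • y) (hnorm : B a a = 1)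
    (x : A) : theta mul a (sigma mul a x) = x := by
  simp only [sigma_apply, theta_apply, mul_mul_right_left hcomp₂ hnorm]

theorem sigma_eq (hBsymm : ∀ x y : A, B x y = B y x)
    (hcomp₁ : ∀ x y : A, mul (mul x y) x = B x x • y) (hidem : mul a a = a) (x : A) :
    sigma mul a x = (2 * B x a) • a - mul a x := by
  have h := linearized_comp_left hBsymm hcomp₁ x a a
  rw [hidem] at h
  exact eq_sub_of_add_eq h

theorem form_sigma_self (hassoc : ∀ x y z : A, B (mul x y) z = B x (mul y z))
    (hidem : mul a a = a) (x : A) : B (sigma mul a x) a = B x a := by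
  rw [sigma_apply, hassoc, hidem, hassoc, hidem]

theorem sigma_sigma (hBsymm : ∀ x y : A, B x y = B y x)
    (hcomp₁ : ∀ x y : A, mul (mul x y) x = B x x • y)
    (hassoc : ∀ x y z : A, B (mul x y) z = B x (mul y z)) (hidem : mul a a = a) (x : A) :
    sigma mul a (sigma mul a x) = theta mul a x := by
  rw [sigma_eq hBsymm hcomp₁ hidem (sigma mul a x), form_sigma_self hassoc hidem,
    sigma_eq hBsymm hcomp₁ hidem x, map_sub, map_smul, hidem, theta_apply, sub_sub_cancel]

theorem form_sigma_sigma (hcomp₂ : ∀ x y : A, mul x (mul y x) = B x x • y)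
    (hassoc : ∀ x y z : A, B (mul x y) z = B x (mul y z)) (hnorm : B a a = 1) (x y : A) :
    B (sigma mul a x) (sigma mul a y) = B x y := by
  rw [sigma_apply, sigma_apply, hassoc, mul_mul_right_left hcomp₂ hnorm, hassoc,
    mul_mul_right_left hcomp₂ hnorm]

theorem sigma_mul (hBsymm : ∀ x y : A, B x y = B y x)
    (hcomp₁ : ∀ x y : A, mul (mul x y) x = B x x • y)
    (hcomp₂ : ∀ x y : A, mul x (mul y x) = B x x • y)
    (hassoc : ∀ x y z : A, B (mul x y) z = B x (mul y z))
    (hidem : mul a a = a) (hnorm : B a a = 1) (x y : A) :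
    sigma mul a (mul x y) = mul (sigma mul a x) (sigma mul a y) := by
  set s := sigma mul a x
  have hs : s = (2 * B x a) • a - mul a x := sigma_eq hBsymm hcomp₁ hidem x
  have hsa : mul s a = (2 * B x a) • a - x := by
    rw [hs, map_sub, map_smul, LinearMap.sub_apply, LinearMap.smul_apply, hidem,
      mul_mul_left_right hcomp₁ hnorm]
  have hsay : mul s (mul a y) = (2 * B s y) • a - mul y (mul x a) := by
    have has : mul a s = mul x a := mul_mul_right_left hcomp₂ hnorm (mul x a)
    have h := linearized_comp_right hBsymm hcomp₂ s a y
    rw [has] at h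
    exact eq_sub_of_add_eq h
  have hyxa : mul y (mul x a) = (2 * B y a) • x - mul a (mul x y) :=
    eq_sub_of_add_eq (linearized_comp_right hBsymm hcomp₂ y x a)
  have hBsy : B s y = 2 * B x a * B a y - B (mul x y) a := by
    rw [hs, map_sub, map_smul, LinearMap.sub_apply, LinearMap.smul_apply, smul_eq_mul, hassoc,
      hBsymm a (mul x y)]
  rw [sigma_eq hBsymm hcomp₁ hidem y, sigma_eq hBsymm hcomp₁ hidem (mul x y), map_sub, map_smul,
    hsa, hsay, hyxa, hBsy, hBsymm y a]
  module

end SymmetricComposition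

open SymmetricComposition in
theorem idempotent_order_three_automorphisms_general
    (F : Type*) [Field F]
    (A : Type*) [AddCommGroup A] [Module F A]
    (mul : A →ₗ[F] A →ₗ[F] A)
    (B : LinearMap.BilinForm F A)
    (hBsymm : ∀ x y : A, B x y = B y x)
    (hcomp₁ : ∀ x y : A, mul (mul x y) x = B x x • y)
    (hcomp₂ : ∀ x y : A, mul x (mul y x) = B x x • y)
    (hassoc : ∀ x y z : A, B (mul x y) z = B x (mul y z))
    (a : A) (hidem : mul a a = a) (hnorm : B a a = 1)
    (σ θ : A → A)
    (hσ : ∀ x : A, σ x = mul (mul x a) a)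
    (hθ : ∀ x : A, θ x = mul a (mul a x)) :
    (∀ x y : A, σ (mul x y) = mul (σ x) (σ y)) ∧
    (∀ x y : A, θ (mul x y) = mul (θ x) (θ y)) ∧
    (∀ x : A, σ (θ x) = x) ∧
    (∀ x : A, θ (σ x) = x) ∧
    (∀ x : A, σ (σ (σ x)) = x) ∧
    (∀ x : A, θ (θ (θ x)) = x) ∧
    (∀ x y : A, B (σ x) (σ y) = B x y) ∧
    (∀ x y : A, B (θ x) (θ y) = B x y) := by
  obtain rfl : σ = sigma mul a := funext hσ
  obtain rfl : θ = theta mul a := funext hθ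
  have hσθ := sigma_theta hcomp₁ hnorm
  have hθσ := theta_sigma hcomp₂ hnorm
  have hσmul := sigma_mul hBsymm hcomp₁ hcomp₂ hassoc hidem hnorm
  have hσB := form_sigma_sigma hcomp₂ hassoc hnorm
  have hσσσ (x : A) : sigma mul a (sigma mul a (sigma mul a x)) = x := by
    rw [sigma_sigma hBsymm hcomp₁ hassoc hidem, hθσ]
  refine ⟨hσmul, fun x y => ?_, hσθ, hθσ, hσσσ, fun x => ?_, hσB, fun x y => ?_⟩
  · rw [← hθσ (mul (theta mul a x) (theta mul a y)), hσmul, hσθ, hσθ]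
  · conv_lhs => rw [← hσσσ x]
    rw [hθσ, hθσ, hθσ]
  · rw [← hσB, hσθ, hσθ]

/-- Theorem 4.1.  Let `a` be a nontrivial idempotent of a
symmetric composition algebra (`aa = a`, `⟨a|a⟩ = 1`), and let
`σ(a)x = (xa)a`, `θ(a)x = a(ax)`.  Then `σ(a)` and `θ(a)` are mutually inverse
isometric automorphisms of `A` of order dividing 3. -/
theorem idempotent_order_three_automorphisms
    (F : Type*) [Field F] (h2 : (2 : F) ≠ 0)
    (A : Type*) [AddCommGroup A] [Module F A]
    (mul : A →ₗ[F] A →ₗ[F] A)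
    (B : LinearMap.BilinForm F A)
    (hBsymm : ∀ x y : A, B x y = B y x)
    (hBnd : B.Nondegenerate)
    (hcomp₁ : ∀ x y : A, mul (mul x y) x = B x x • y)
    (hcomp₂ : ∀ x y : A, mul x (mul y x) = B x x • y)
    (hmult : ∀ x y : A, B (mul x y) (mul x y) = B x x * B y y)
    (hassoc : ∀ x y z : A, B (mul x y) z = B x (mul y z))
    (a : A) (hidem : mul a a = a) (hnorm : B a a = 1)
    (σ θ : A → A)
    (hσ : ∀ x : A, σ x = mul (mul x a) a)
    (hθ : ∀ x : A, θ x = mul a (mul a x)) :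
    (∀ x y : A, σ (mul x y) = mul (σ x) (σ y)) ∧
    (∀ x y : A, θ (mul x y) = mul (θ x) (θ y)) ∧
    (∀ x : A, σ (θ x) = x) ∧
    (∀ x : A, θ (σ x) = x) ∧
    (∀ x : A, σ (σ (σ x)) = x) ∧
    (∀ x : A, θ (θ (θ x)) = x) ∧
    (∀ x y : A, B (σ x) (σ y) = B x y) ∧
    (∀ x y : A, B (θ x) (θ y) = B x y) :=
  idempotent_order_three_automorphisms_general F A mul B hBsymm hcomp₁ hcomp₂ hassoc a hidem hnorm σ
    θ hσ hθ
end

section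
/- Let A* be a Hurwitz algebra over a field F of characteristic ≠ 2 with unit e, and let a ∈ A* satisfy ⟨a|a⟩ = 1 and 2⟨e|a⟩ = −1. Define σ(a) ∈ End_F(A*) by σ(a)x = ā*(x*a), where x̄ = 2⟨e|x⟩e − x. Then: (i) ā*(x*a) = (ā*x)*a for all x; (ii) σ(a)(x*y) = (σ(a)x)*(σ(a)y) for all x, y ∈ A*; (iii) σ(a)∘σ(ā) = Id; (iv) (σ(a))³ = Id; (v) ⟨σ(a)x|σ(a)y⟩ = ⟨x|y⟩ for all x, y ∈ A*. In particular σ(a) is an automorphism of A*. -/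
/-!
The para-product `x·y = conj (x*y)` makes `A` a symmetric composition algebra in which `a` is an
idempotent of norm one (as `a*a = ā`), and `σ(a) = R²` for the right para-multiplication `R`
by `a`. Then `R` is an isometry with `R³x = 2⟨x|a⟩a − x`, so `R⁶ = 1`, and `R²x = 2⟨x|a⟩a − a·x`;
expanding `R²x · R²y` with the linearized identities `(x·y)·z + (z·y)·x = 2⟨x|z⟩y` and
`x·(y·z) + z·(y·x) = 2⟨x|z⟩y` gives `R²(x·y)`. As `σ(a)` commutes with conjugation,
multiplicativity passes from `·` to `*`.

Part (i) is the flexible law `(a*x)*a = a*(x*a)`: the identities `x̄*(x*y) = ⟨x|x⟩y` and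
`(y*x)*x̄ = ⟨x|x⟩y` are the alternative laws, and alternative algebras are flexible.
-/
section

variable {F A : Type*} [Field F] [AddCommGroup A] [Module F A]

structure IsSymmetricComposition_s13 (B : LinearMap.BilinForm F A) (pmul : A → A → A) : Prop where
  symm : ∀ x y, B x y = B y x
  nondegenerate : B.Nondegenerate
  pmul_pmul_left : ∀ x y, pmul (pmul x y) x = B x x • y
  pmul_pmul_right : ∀ x y, pmul x (pmul y x) = B x x • y
  assoc : ∀ x y z, B (pmul x y) z = B x (pmul y z)

namespace IsSymmetricComposition_s13

variable {B : LinearMap.BilinForm F A} {pmul : A → A → A}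

theorem eq_of_bilin_eq (hS : IsSymmetricComposition_s13 B pmul) {u v : A}
    (h : ∀ t, B t u = B t v) : u = v :=
  sub_eq_zero.mp <| hS.nondegenerate.1 _ fun t => by
    rw [map_sub, LinearMap.sub_apply, hS.symm u, hS.symm v, h, sub_self]

/-- The invariance of `B` forces `pmul` to be bilinear. -/
noncomputable def mulₗ (hS : IsSymmetricComposition_s13 B pmul) : A →ₗ[F] A →ₗ[F] A :=
  LinearMap.mk₂ F pmul
    (fun x y z => hS.eq_of_bilin_eq fun t => by
      simp only [hS.symm t, hS.assoc, map_add, LinearMap.add_apply])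
    (fun c x y => hS.eq_of_bilin_eq fun t => by
      simp only [hS.symm t, hS.assoc, map_smul, LinearMap.smul_apply])
    (fun x y z => hS.eq_of_bilin_eq fun t => by simp only [← hS.assoc, map_add])
    (fun c x y => hS.eq_of_bilin_eq fun t => by simp only [← hS.assoc, map_smul])

@[simp]
theorem mulₗ_apply (hS : IsSymmetricComposition_s13 B pmul) (x y : A) : hS.mulₗ x y = pmul x y :=
  rfl

theorem pmul_pmul_add_pmul_pmul (hS : IsSymmetricComposition_s13 B pmul) (x y z : A) :
    pmul (pmul x y) z + pmul (pmul z y) x = (2 * B x z) • y := by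
  have h := hS.pmul_pmul_left (x + z) y
  simp only [← hS.mulₗ_apply, map_add, LinearMap.add_apply] at h
  simp only [hS.mulₗ_apply, hS.pmul_pmul_left, hS.symm z x] at h
  linear_combination (norm := module) h

theorem pmul_pmul_add_pmul_pmul' (hS : IsSymmetricComposition_s13 B pmul) (x y z : A) :
    pmul x (pmul y z) + pmul z (pmul y x) = (2 * B x z) • y := by
  have h := hS.pmul_pmul_right (x + z) y
  simp only [← hS.mulₗ_apply, map_add, LinearMap.add_apply] at h
  simp only [hS.mulₗ_apply, hS.pmul_pmul_right, hS.symm z x] at h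
  linear_combination (norm := module) h

section Idempotent

variable {a : A}

theorem pmul_idem_pmul (hS : IsSymmetricComposition_s13 B pmul) (hna : B a a = 1) (u : A) :
    pmul a (pmul u a) = u := by
  rw [hS.pmul_pmul_right, hna, one_smul]

theorem pmul_pmul_idem (hS : IsSymmetricComposition_s13 B pmul) (hna : B a a = 1) (u : A) :
    pmul (pmul a u) a = u := by
  rw [hS.pmul_pmul_left, hna, one_smul]

theorem bilin_pmul_idem (hS : IsSymmetricComposition_s13 B pmul) (hna : B a a = 1) (u v : A) :
    B (pmul u a) (pmul v a) = B u v := by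
  rw [hS.assoc, hS.pmul_idem_pmul hna]

theorem bilin_pmul_idem_idem (hS : IsSymmetricComposition_s13 B pmul) (ha : pmul a a = a) (u : A) :
    B (pmul u a) a = B u a := by
  rw [hS.assoc, ha]

theorem pmul_pmul_idem_eq (hS : IsSymmetricComposition_s13 B pmul) (ha : pmul a a = a) (x : A) :
    pmul (pmul x a) a = (2 * B x a) • a - pmul a x := by
  rw [← hS.pmul_pmul_add_pmul_pmul x a a, ha, add_sub_cancel_right]

theorem pmul_idem_pmul_idem (hS : IsSymmetricComposition_s13 B pmul) (ha : pmul a a = a)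
    (hna : B a a = 1) (x : A) : pmul a (pmul a x) = (2 * B x a) • a - pmul x a := by
  have h := hS.pmul_pmul_idem_eq ha (pmul a x)
  rw [hS.pmul_pmul_idem hna, hS.assoc, hS.symm, hS.bilin_pmul_idem_idem ha] at h
  rw [h, sub_sub_cancel]

theorem pmul_pmul_pmul_idem (hS : IsSymmetricComposition_s13 B pmul) (ha : pmul a a = a)
    (hna : B a a = 1) (x : A) : pmul (pmul (pmul x a) a) a = (2 * B x a) • a - x := by
  rw [hS.pmul_pmul_idem_eq ha, hS.pmul_idem_pmul hna, hS.bilin_pmul_idem_idem ha]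

theorem pmul_idem_iterate_six (hS : IsSymmetricComposition_s13 B pmul) (ha : pmul a a = a)
    (hna : B a a = 1) (x : A) :
    pmul (pmul (pmul (pmul (pmul (pmul x a) a) a) a) a) a = x := by
  rw [hS.pmul_pmul_pmul_idem ha hna x, hS.pmul_pmul_pmul_idem ha hna]
  simp only [map_sub, map_smul, LinearMap.sub_apply, LinearMap.smul_apply, smul_eq_mul, hna]
  module

theorem pmul_pmul_idem_pmul (hS : IsSymmetricComposition_s13 B pmul) (ha : pmul a a = a)
    (hna : B a a = 1) (x y : A) :
    pmul (pmul (pmul x y) a) a = pmul (pmul (pmul x a) a) (pmul (pmul y a) a) := by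
  have hxy := hS.pmul_pmul_add_pmul_pmul' y x a
  have hax := hS.pmul_pmul_add_pmul_pmul' (pmul a x) a y
  rw [hS.pmul_idem_pmul_idem ha hna, hS.assoc, hS.symm a] at hax
  rw [hS.pmul_pmul_idem_eq ha x, hS.pmul_pmul_idem_eq ha y, hS.pmul_pmul_idem_eq ha (pmul x y)]
  simp only [← hS.mulₗ_apply, map_sub, map_smul, LinearMap.sub_apply, LinearMap.smul_apply]
    at hax hxy ⊢
  simp only [hS.mulₗ_apply, ha, hS.pmul_pmul_idem hna, hS.pmul_idem_pmul_idem ha hna] at hax hxy ⊢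
  linear_combination (norm := module) -hax - hxy

end Idempotent

end IsSymmetricComposition_s13

theorem flexible_of_alternative {R M : Type*} [CommRing R] [AddCommGroup M] [Module R M]
    (mul : M →ₗ[R] M →ₗ[R] M) (hl : ∀ x y, mul x (mul x y) = mul (mul x x) y)
    (hr : ∀ x y, mul (mul y x) x = mul y (mul x x)) (x y : M) :
    mul (mul x y) x = mul x (mul y x) := by
  have h := hl (x + y) x
  simp only [map_add, LinearMap.add_apply] at h
  linear_combination (norm := module) hl x x + hl y x - hr x y - h

section Hurwitz

variable {mul : A →ₗ[F] A →ₗ[F] A} {B : LinearMap.BilinForm F A} {e : A} {conj : A → A}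
  {pmul : A → A → A}

theorem bilin_unit_unit_eq_one (hel : ∀ x, mul e x = x)
    (hquad : mul e e = (2 * B e e) • e - B e e • e) (he : e ≠ 0) : B e e = 1 := by
  rw [hel] at hquad
  have h : (B e e - 1) • e = 0 := by linear_combination (norm := module) -hquad
  exact sub_eq_zero.mp ((smul_eq_zero.mp h).resolve_right he)

theorem conj_involutive (hconj : ∀ x, conj x = (2 * B e x) • e - x) (hee : B e e = 1) :
    Function.Involutive conj := fun x => by
  rw [hconj, hconj x]
  simp only [map_sub, map_smul, smul_eq_mul, hee]
  module

theorem bilin_conj_conj (hBsymm : ∀ x y, B x y = B y x)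
    (hconj : ∀ x, conj x = (2 * B e x) • e - x) (hee : B e e = 1) (x y : A) :
    B (conj x) (conj y) = B x y := by
  simp only [hconj, map_sub, map_smul, LinearMap.sub_apply, LinearMap.smul_apply, smul_eq_mul,
    hee, hBsymm x e]
  ring

theorem mul_eq_pmul_conj (hpmul : ∀ x y, pmul x y = conj (mul x y))
    (hconjmul : ∀ x y, conj (mul x y) = mul (conj y) (conj x)) (hcc : Function.Involutive conj)
    (x y : A) : mul x y = pmul (conj y) (conj x) := by
  rw [hpmul, hconjmul, hcc, hcc]

theorem conj_mul_mul_self (hpmul : ∀ x y, pmul x y = conj (mul x y))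
    (hconjmul : ∀ x y, conj (mul x y) = mul (conj y) (conj x)) (hcc : Function.Involutive conj)
    (hpc : ∀ x y, pmul (pmul x y) x = B x x • y) (x y : A) :
    mul (conj x) (mul x y) = B x x • y := by
  rw [mul_eq_pmul_conj hpmul hconjmul hcc (conj x), ← hpmul, hcc, hpc]

theorem mul_mul_conj_self (hpmul : ∀ x y, pmul x y = conj (mul x y))
    (hconjmul : ∀ x y, conj (mul x y) = mul (conj y) (conj x)) (hcc : Function.Involutive conj)
    (hpc : ∀ x y, pmul x (pmul y x) = B x x • y) (x y : A) :
    mul (mul y x) (conj x) = B x x • y := by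
  rw [mul_eq_pmul_conj hpmul hconjmul hcc _ (conj x), ← hpmul, hcc, hpc]

theorem mul_mul_self_left (hconj : ∀ x, conj x = (2 * B e x) • e - x) (hel : ∀ x, mul e x = x)
    (hquad : ∀ x, mul x x = (2 * B e x) • x - B x x • e)
    (hL : ∀ x y, mul (conj x) (mul x y) = B x x • y) (x y : A) :
    mul x (mul x y) = mul (mul x x) y := by
  have h := hL x y
  rw [hconj, map_sub, map_smul, LinearMap.sub_apply, LinearMap.smul_apply, hel] at h
  rw [hquad, map_sub, map_smul, map_smul, LinearMap.sub_apply, LinearMap.smul_apply,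
    LinearMap.smul_apply, hel]
  linear_combination (norm := module) -h

theorem mul_mul_self_right (hconj : ∀ x, conj x = (2 * B e x) • e - x) (her : ∀ x, mul x e = x)
    (hquad : ∀ x, mul x x = (2 * B e x) • x - B x x • e)
    (hR : ∀ x y, mul (mul y x) (conj x) = B x x • y) (x y : A) :
    mul (mul y x) x = mul y (mul x x) := by
  have h := hR x y
  rw [hconj, map_sub, map_smul, her] at h
  rw [hquad, map_sub, map_smul, map_smul, her]
  linear_combination (norm := module) -h

theorem conj_mul_mul_eq_mul_mul (hconj : ∀ x, conj x = (2 * B e x) • e - x)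
    (hel : ∀ x, mul e x = x) (hflex : ∀ x y, mul (mul x y) x = mul x (mul y x)) (a x : A) :
    mul (conj a) (mul x a) = mul (mul (conj a) x) a := by
  simp only [hconj, map_sub, map_smul, LinearMap.sub_apply, LinearMap.smul_apply, hel, hflex]

theorem mul_self_eq_conj (hconj : ∀ x, conj x = (2 * B e x) • e - x)
    (hquad : ∀ x, mul x x = (2 * B e x) • x - B x x • e) {a : A} (hna : B a a = 1)
    (hta : 2 * B e a = -1) : mul a a = conj a := by
  rw [hquad, hconj, hna, hta]
  module

end Hurwitz

end

theorem hurwitz_sigma_automorphism_general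
    (F : Type*) [Field F]
    (A : Type*) [AddCommGroup A] [Module F A]
    (mul : A →ₗ[F] A →ₗ[F] A)   -- the Hurwitz product x*y
    (B : LinearMap.BilinForm F A)
    (hBsymm : ∀ x y : A, B x y = B y x)
    (hBnd : B.Nondegenerate)
    (e : A) (hel : ∀ x : A, mul e x = x) (her : ∀ x : A, mul x e = x)
    -- quadratic relation x*x = 2⟨e|x⟩x − ⟨x|x⟩e
    (hquad : ∀ x : A, mul x x = (2 * B e x) • x - B x x • e)
    -- the conjugation x̄ = 2⟨e|x⟩e − x
    (conj : A → A) (hconj : ∀ x : A, conj x = (2 * B e x) • e - x)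
    (hconjmul : ∀ x y : A, conj (mul x y) = mul (conj y) (conj x))
    -- the para-product xy := conj(x*y) makes A* a symmetric composition algebra
    (pmul : A → A → A) (hpmul : ∀ x y : A, pmul x y = conj (mul x y))
    (hpc₁ : ∀ x y : A, pmul (pmul x y) x = B x x • y)
    (hpc₂ : ∀ x y : A, pmul x (pmul y x) = B x x • y)
    (hpassoc : ∀ x y z : A, B (pmul x y) z = B x (pmul y z))
    (a : A) (hnorm : B a a = 1) (htrace : 2 * B e a = -1)
    (σ σ' : A → A)
    (hσ : ∀ x : A, σ x = mul (conj a) (mul x a))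
    (hσ' : ∀ x : A, σ' x = mul (conj (conj a)) (mul x (conj a))) :
    (∀ x : A, mul (conj a) (mul x a) = mul (mul (conj a) x) a) ∧
    (∀ x y : A, σ (mul x y) = mul (σ x) (σ y)) ∧
    (∀ x : A, σ (σ' x) = x) ∧
    (∀ x : A, σ (σ (σ x)) = x) ∧
    (∀ x y : A, B (σ x) (σ y) = B x y) := by
  have he : e ≠ 0 := by
    rintro rfl
    rw [← hel a, map_zero, LinearMap.zero_apply, map_zero] at hnorm
    exact zero_ne_one hnorm
  have hee := bilin_unit_unit_eq_one hel (hquad e) he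
  have hcc : Function.Involutive conj := conj_involutive hconj hee
  have hS : IsSymmetricComposition_s13 B pmul := ⟨hBsymm, hBnd, hpc₁, hpc₂, hpassoc⟩
  have hL := conj_mul_mul_self hpmul hconjmul hcc hpc₁
  have hR := mul_mul_conj_self hpmul hconjmul hcc hpc₂
  have hi := conj_mul_mul_eq_mul_mul hconj hel
    (flexible_of_alternative mul (mul_mul_self_left hconj hel hquad hL)
      (mul_mul_self_right hconj her hquad hR)) a
  have haa : pmul a a = a := by rw [hpmul, mul_self_eq_conj hconj hquad hnorm htrace, hcc]
  have hστ : ∀ x, σ x = pmul (pmul x a) a := fun x => by rw [hσ, hpmul, hpmul, hconjmul, hcc]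
  have hσconj : ∀ x, σ (conj x) = conj (σ x) := fun x => by
    rw [hσ, hσ, hconjmul, hconjmul, hcc, hi]
  refine ⟨hi, fun x y => ?_, fun x => ?_, fun x => ?_, fun x y => ?_⟩
  · calc σ (mul x y) = conj (σ (pmul x y)) := by rw [← hσconj, hpmul, hcc]
      _ = mul (σ x) (σ y) := by rw [hστ, hστ, hστ, hS.pmul_pmul_idem_pmul haa hnorm, hpmul, hcc]
  · have h := hR (conj a) x
    rw [hcc, bilin_conj_conj hBsymm hconj hee, hnorm, one_smul] at h
    rw [hσ', hcc, hσ, hi, hL, hnorm, one_smul, h]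
  · simp only [hστ]
    exact hS.pmul_idem_iterate_six haa hnorm x
  · rw [hστ, hστ, hS.bilin_pmul_idem hnorm, hS.bilin_pmul_idem hnorm]

/-- Corollary 4.2.  Let `A*` be a Hurwitz algebra with unit
`e` and let `a` satisfy `⟨a|a⟩ = 1`, `2⟨e|a⟩ = −1`.  With the conjugation
`x̄ = 2⟨e|x⟩e − x` and `σ(a)x = ā*(x*a)`, the map `σ(a)` is an isometric
automorphism of `A*` with `σ(a)σ(ā) = Id` and `σ(a)³ = Id`; moreover
`ā*(x*a) = (ā*x)*a`. -/
theorem hurwitz_sigma_automorphism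
    (F : Type*) [Field F] (h2 : (2 : F) ≠ 0)
    (A : Type*) [AddCommGroup A] [Module F A]
    (mul : A →ₗ[F] A →ₗ[F] A)   -- the Hurwitz product x*y
    (B : LinearMap.BilinForm F A)
    (hBsymm : ∀ x y : A, B x y = B y x)
    (hBnd : B.Nondegenerate)
    (e : A) (hel : ∀ x : A, mul e x = x) (her : ∀ x : A, mul x e = x)
    (hcl : ∀ x y : A, B (mul x y) (mul x y) = B x x * B y y)
    -- quadratic relation x*x = 2⟨e|x⟩x − ⟨x|x⟩e
    (hquad : ∀ x : A, mul x x = (2 * B e x) • x - B x x • e)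
    -- the conjugation x̄ = 2⟨e|x⟩e − x
    (conj : A → A) (hconj : ∀ x : A, conj x = (2 * B e x) • e - x)
    (hconjmul : ∀ x y : A, conj (mul x y) = mul (conj y) (conj x))
    -- the para-product xy := conj(x*y) makes A* a symmetric composition algebra
    (pmul : A → A → A) (hpmul : ∀ x y : A, pmul x y = conj (mul x y))
    (hpc₁ : ∀ x y : A, pmul (pmul x y) x = B x x • y)
    (hpc₂ : ∀ x y : A, pmul x (pmul y x) = B x x • y)
    (hpassoc : ∀ x y z : A, B (pmul x y) z = B x (pmul y z))
    (a : A) (hnorm : B a a = 1) (htrace : 2 * B e a = -1)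
    (σ σ' : A → A)
    (hσ : ∀ x : A, σ x = mul (conj a) (mul x a))
    (hσ' : ∀ x : A, σ' x = mul (conj (conj a)) (mul x (conj a))) :
    (∀ x : A, mul (conj a) (mul x a) = mul (mul (conj a) x) a) ∧
    (∀ x y : A, σ (mul x y) = mul (σ x) (σ y)) ∧
    (∀ x : A, σ (σ' x) = x) ∧
    (∀ x : A, σ (σ (σ x)) = x) ∧
    (∀ x y : A, B (σ x) (σ y) = B x y) :=
  hurwitz_sigma_automorphism_general F A mul B hBsymm hBnd e hel her hquad conj hconj hconjmul pmul
    hpmul hpc₁ hpc₂ hpassoc a hnorm htrace σ σ' hσ hσ'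
end

section
/- Let A* be a Hurwitz algebra over a field F of characteristic ≠ 2 with unit e, and write xy := conj(x*y) = ȳ*x̄ for the para-product. Let a, p ∈ A* satisfy ⟨a|a⟩ = 1, 2⟨a|e⟩ = −1, ⟨a|p⟩ = 0, and ap + pa = p, and set q = ap. Then: (1) ⟨p|p⟩ = ⟨q|q⟩ = 2⟨p|q⟩ and ⟨p|a⟩ = ⟨q|a⟩ = 0; (2) ⟨p|e⟩ = ⟨q|e⟩ = 0 and ā = −e − a; (3) q = −p*ā = −a*p and p = −ā*q = −q*a; (4) q*p = ⟨p|p⟩a and p*q = ⟨p|p⟩ā. -/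
/-!
Everything is computed from the para-products of `a`, `p` and `q = ap`. In the symmetric
composition algebra, `(xy)x = x(yx) = ⟨x|x⟩y` together with `pa = p - q` give `qa = p`,
`aq = q - p`, `pq = ⟨p|p⟩a` and `qp = pp - ⟨p|p⟩a`, and associativity of the form gives the
relations between `⟨p|p⟩`, `⟨p|q⟩` and `⟨q|a⟩`. On the Hurwitz side, conjugating `ap + pa = p` and
comparing with the linearized quadratic relation forces `⟨e|p⟩ = 0`, hence `p̄ = -p`, `q̄ = -q` and
`pp = -⟨p|p⟩e`; the products `x*y = conj(xy)` are then read off.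
-/

namespace SymmetricComposition

variable {F A : Type*} [Field F] [AddCommGroup A] [Module F A]
  {pm : A →ₗ[F] A →ₗ[F] A} {B : LinearMap.BilinForm F A} {a p : A}

theorem mul_mul_self_of_norm_eq_one (hpc₁ : ∀ x y : A, pm (pm x y) x = B x x • y)
    (ha : B a a = 1) : pm (pm a p) a = p := by
  rw [hpc₁, ha, one_smul]

theorem mul_self_mul_eq_sub_of_add_swap (hpc₂ : ∀ x y : A, pm x (pm y x) = B x x • y)
    (ha : B a a = 1) (hap : pm a p + pm p a = p) : pm a (pm a p) = pm a p - p := by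
  have h := hpc₂ a p
  rw [ha, one_smul, eq_sub_of_add_eq' hap, map_sub] at h
  linear_combination (norm := module) -h

theorem mul_mul_eq_sub_of_add_swap (hpc₁ : ∀ x y : A, pm (pm x y) x = B x x • y)
    (hap : pm a p + pm p a = p) : pm (pm a p) p = pm p p - B p p • a := by
  have h := hpc₁ p a
  rw [eq_sub_of_add_eq' hap, map_sub, LinearMap.sub_apply] at h
  linear_combination (norm := module) -h

theorem bilin_self_eq_two_mul_of_add_swap (hBsymm : ∀ x y : A, B x y = B y x)
    (hpassoc : ∀ x y z : A, B (pm x y) z = B x (pm y z)) (hap : pm a p + pm p a = p) :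
    B p p = 2 * B p (pm a p) := by
  have h := hpassoc p a p
  rw [eq_sub_of_add_eq' hap, map_sub, LinearMap.sub_apply, hBsymm (pm a p) p] at h
  linear_combination h

theorem bilin_mul_eq_zero_of_add_swap (h2 : (2 : F) ≠ 0) (hBsymm : ∀ x y : A, B x y = B y x)
    (hpassoc : ∀ x y z : A, B (pm x y) z = B x (pm y z)) (hao : B a p = 0)
    (hap : pm a p + pm p a = p) : B (pm a p) a = 0 := by
  have h := hpassoc a p a
  rw [eq_sub_of_add_eq' hap, map_sub, hao, hBsymm a] at h
  exact (mul_eq_zero.mp (by linear_combination h : 2 * B (pm a p) a = 0)).resolve_left h2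

end SymmetricComposition

namespace Hurwitz

variable {F A : Type*} [Field F] [AddCommGroup A] [Module F A]
  {mul : A →ₗ[F] A →ₗ[F] A} {B : LinearMap.BilinForm F A} {e : A}

def conj (B : LinearMap.BilinForm F A) (e : A) : A →ₗ[F] A :=
  (2 : F) • (B e).smulRight e - LinearMap.id

@[simp]
theorem conj_apply (x : A) : conj B e x = (2 * B e x) • e - x := by
  simp [conj, mul_smul]

def paraMul (mul : A →ₗ[F] A →ₗ[F] A) (B : LinearMap.BilinForm F A) (e : A) :
    A →ₗ[F] A →ₗ[F] A :=
  mul.compr₂ (conj B e)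

@[simp]
theorem paraMul_apply (x y : A) : paraMul mul B e x y = conj B e (mul x y) := rfl

theorem bilin_unit_self_eq_one (hel : ∀ x : A, mul e x = x)
    (hcl : ∀ x y : A, B (mul x y) (mul x y) = B x x * B y y) {a : A} (ha : B a a ≠ 0) :
    B e e = 1 := by
  have h := hcl e a
  rw [hel] at h
  exact (mul_eq_right₀ ha).mp h.symm

theorem conj_conj (hBee : B e e = 1) (x : A) : conj B e (conj B e x) = x := by
  simp only [conj_apply, map_sub, map_smul, hBee]
  module

theorem conj_unit (hBee : B e e = 1) : conj B e e = e := by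
  rw [conj_apply, hBee]
  module

theorem conj_eq_neg (x : A) (hx : B e x = 0) : conj B e x = -x := by
  rw [conj_apply, hx]
  module

theorem bilin_conj_conj (hBsymm : ∀ x y : A, B x y = B y x) (hBee : B e e = 1) (x y : A) :
    B (conj B e x) (conj B e y) = B x y := by
  simp only [conj_apply, map_sub, map_smul, LinearMap.sub_apply, LinearMap.smul_apply,
    smul_eq_mul, hBee, hBsymm x e]
  ring

theorem mul_eq_conj_paraMul (hBee : B e e = 1) (x y : A) :
    mul x y = conj B e (paraMul mul B e x y) :=
  (conj_conj hBee _).symm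

theorem paraMul_self (hquad : ∀ x : A, mul x x = (2 * B e x) • x - B x x • e)
    (hBee : B e e = 1) {x : A} (hx : B e x = 0) : paraMul mul B e x x = -(B x x • e) := by
  rw [paraMul_apply, hquad, hx, mul_zero, zero_smul, zero_sub, map_neg, map_smul, conj_unit hBee]

theorem mul_add_mul_swap (hBsymm : ∀ x y : A, B x y = B y x)
    (hquad : ∀ x : A, mul x x = (2 * B e x) • x - B x x • e) (x y : A) :
    mul x y + mul y x = (2 * B e x) • y + (2 * B e y) • x - (2 * B x y) • e := by
  have h := hquad (x + y)
  simp only [map_add, LinearMap.add_apply, hquad x, hquad y, hBsymm y x] at h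
  linear_combination (norm := module) h

theorem conj_eq_neg_unit_sub {a : A} (hBea : 2 * B e a = -1) : conj B e a = -e - a := by
  rw [conj_apply, hBea]
  module

theorem bilin_unit_eq_zero_of_paraMul_add_swap (h2 : (2 : F) ≠ 0)
    (hBsymm : ∀ x y : A, B x y = B y x)
    (hquad : ∀ x : A, mul x x = (2 * B e x) • x - B x x • e) (hBee : B e e = 1) {a p : A}
    (hBea : 2 * B e a = -1) (hao : B a p = 0)
    (hap : paraMul mul B e a p + paraMul mul B e p a = p) : B e p = 0 := by
  have hconj : mul a p + mul p a = conj B e p := by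
    simpa only [map_add, paraMul_apply, conj_conj hBee] using congrArg (conj B e) hap
  -- comparing with the linearized quadratic relation gives `2⟨e|p⟩ (e - a) = 0`
  have h := mul_add_mul_swap hBsymm hquad a p
  rw [hconj, conj_apply, hBea, hao] at h
  have hkey : (2 * B e p) • (e - a) = 0 := by linear_combination (norm := module) h
  rcases smul_eq_zero.mp hkey with h | h
  · exact (mul_eq_zero.mp h).resolve_left h2
  · rwa [sub_eq_zero.mp h]

theorem bilin_unit_paraMul_eq_zero (hel : ∀ x : A, mul e x = x)
    (hpassoc : ∀ x y z : A, B (paraMul mul B e x y) z = B x (paraMul mul B e y z)) {a p : A}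
    (hBea : 2 * B e a = -1) (hBep : B e p = 0) (hao : B a p = 0) :
    B e (paraMul mul B e a p) = 0 := by
  rw [← hpassoc, paraMul_apply, hel, conj_eq_neg_unit_sub hBea, map_sub, map_neg,
    LinearMap.sub_apply, LinearMap.neg_apply, hBep, hao, neg_zero, sub_zero]

end Hurwitz

open SymmetricComposition Hurwitz in
theorem hurwitz_constrained_relations_general
    (F : Type*) [Field F] (h2 : (2 : F) ≠ 0)
    (A : Type*) [AddCommGroup A] [Module F A]
    (mul : A →ₗ[F] A →ₗ[F] A)   -- the Hurwitz product x*y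
    (B : LinearMap.BilinForm F A)
    (hBsymm : ∀ x y : A, B x y = B y x)
    (e : A) (hel : ∀ x : A, mul e x = x) (her : ∀ x : A, mul x e = x)
    (hcl : ∀ x y : A, B (mul x y) (mul x y) = B x x * B y y)
    (hquad : ∀ x : A, mul x x = (2 * B e x) • x - B x x • e)
    (conj : A → A) (hconj : ∀ x : A, conj x = (2 * B e x) • e - x)
    (pmul : A → A → A) (hpmul : ∀ x y : A, pmul x y = conj (mul x y))
    (hpc₁ : ∀ x y : A, pmul (pmul x y) x = B x x • y)
    (hpc₂ : ∀ x y : A, pmul x (pmul y x) = B x x • y)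
    (hpassoc : ∀ x y z : A, B (pmul x y) z = B x (pmul y z))
    (a p q : A)
    (hnorm : B a a = 1) (htrace : 2 * B a e = -1)
    (haporth : B a p = 0)
    (hap : pmul a p + pmul p a = p)
    (hqdef : q = pmul a p) :
    (B p p = B q q ∧ B q q = 2 * B p q ∧ B p a = 0 ∧ B q a = 0) ∧
    (B p e = 0 ∧ B q e = 0 ∧ conj a = -e - a) ∧
    (q = -(mul p (conj a)) ∧ q = -(mul a p) ∧
      p = -(mul (conj a) q) ∧ p = -(mul q a)) ∧
    (mul q p = B p p • a ∧ mul p q = B p p • conj a) := by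
  obtain rfl : conj = Hurwitz.conj B e := funext fun x => (hconj x).trans (conj_apply x).symm
  obtain rfl : pmul = fun x y => paraMul mul B e x y := funext₂ hpmul
  beta_reduce at hpc₁ hpc₂ hpassoc hap hqdef
  have hBee : B e e = 1 := bilin_unit_self_eq_one hel hcl (by rw [hnorm]; exact one_ne_zero)
  have hBea : 2 * B e a = -1 := by rwa [hBsymm]
  have hca := conj_eq_neg_unit_sub hBea
  have hBep := bilin_unit_eq_zero_of_paraMul_add_swap h2 hBsymm hquad hBee hBea haporth hap
  have hBeq : B e q = 0 := hqdef ▸ bilin_unit_paraMul_eq_zero hel hpassoc hBea hBep haporth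
  have hpa : paraMul mul B e p a = p - q := hqdef ▸ eq_sub_of_add_eq' hap
  have hqa : paraMul mul B e q a = p := hqdef ▸ mul_mul_self_of_norm_eq_one hpc₁ hnorm
  have haq : paraMul mul B e a q = q - p :=
    hqdef ▸ mul_self_mul_eq_sub_of_add_swap hpc₂ hnorm hap
  have hqp : paraMul mul B e q p = B p p • Hurwitz.conj B e a := by
    rw [hqdef, mul_mul_eq_sub_of_add_swap hpc₁ hap, paraMul_self hquad hBee hBep, hca]
    module
  have hcp := conj_eq_neg p hBep
  have hcq := conj_eq_neg q hBeq
  have hBqq : B q q = B p p := by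
    rw [hqdef, paraMul_apply, bilin_conj_conj hBsymm hBee, hcl, hnorm, one_mul]
  refine ⟨⟨?_, ?_, hBsymm p a ▸ haporth, ?_⟩, ⟨hBsymm p e ▸ hBep, hBsymm q e ▸ hBeq, hca⟩,
    ⟨?_, ?_, ?_, ?_⟩, ?_, ?_⟩
  · rw [hBqq]
  · rw [hBqq, hqdef]
    exact bilin_self_eq_two_mul_of_add_swap hBsymm hpassoc hap
  · exact hqdef ▸ bilin_mul_eq_zero_of_add_swap h2 hBsymm hpassoc haporth hap
  · rw [hca, map_sub, map_neg, her, mul_eq_conj_paraMul hBee p a, hpa, map_sub, hcp, hcq]; abel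
  · rw [mul_eq_conj_paraMul hBee, ← hqdef, hcq, neg_neg]
  · rw [hca, map_sub, map_neg, LinearMap.sub_apply, LinearMap.neg_apply, hel,
      mul_eq_conj_paraMul hBee a q, haq, map_sub, hcp, hcq]; abel
  · rw [mul_eq_conj_paraMul hBee, hqa, hcp, neg_neg]
  · rw [mul_eq_conj_paraMul hBee, hqp, map_smul, conj_conj hBee]
  · rw [mul_eq_conj_paraMul hBee, hqdef, hpc₂, map_smul]

/-- Lemma 4.4.  Let `A*` be a Hurwitz algebra with unit `e`
and para-product `xy = conj(x*y)`.  If `⟨a|a⟩ = 1`, `2⟨a|e⟩ = −1`, `⟨a|p⟩ = 0`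
and `ap + pa = p` (para-products), and `q = ap`, then:
(1) `⟨p|p⟩ = ⟨q|q⟩ = 2⟨p|q⟩`, `⟨p|a⟩ = ⟨q|a⟩ = 0`;
(2) `⟨p|e⟩ = ⟨q|e⟩ = 0`, `ā = −e − a`;
(3) `q = −p*ā = −a*p`, `p = −ā*q = −q*a`;
(4) `q*p = ⟨p|p⟩a`, `p*q = ⟨p|p⟩ā`. -/
theorem hurwitz_constrained_relations
    (F : Type*) [Field F] (h2 : (2 : F) ≠ 0)
    (A : Type*) [AddCommGroup A] [Module F A]
    (mul : A →ₗ[F] A →ₗ[F] A)   -- the Hurwitz product x*y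
    (B : LinearMap.BilinForm F A)
    (hBsymm : ∀ x y : A, B x y = B y x)
    (hBnd : B.Nondegenerate)
    (e : A) (hel : ∀ x : A, mul e x = x) (her : ∀ x : A, mul x e = x)
    (hcl : ∀ x y : A, B (mul x y) (mul x y) = B x x * B y y)
    (hquad : ∀ x : A, mul x x = (2 * B e x) • x - B x x • e)
    (conj : A → A) (hconj : ∀ x : A, conj x = (2 * B e x) • e - x)
    (hconjmul : ∀ x y : A, conj (mul x y) = mul (conj y) (conj x))
    (pmul : A → A → A) (hpmul : ∀ x y : A, pmul x y = conj (mul x y))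
    (hpc₁ : ∀ x y : A, pmul (pmul x y) x = B x x • y)
    (hpc₂ : ∀ x y : A, pmul x (pmul y x) = B x x • y)
    (hpassoc : ∀ x y z : A, B (pmul x y) z = B x (pmul y z))
    (a p q : A)
    (hnorm : B a a = 1) (htrace : 2 * B a e = -1)
    (haporth : B a p = 0)
    (hap : pmul a p + pmul p a = p)
    (hqdef : q = pmul a p) :
    (B p p = B q q ∧ B q q = 2 * B p q ∧ B p a = 0 ∧ B q a = 0) ∧
    (B p e = 0 ∧ B q e = 0 ∧ conj a = -e - a) ∧
    (q = -(mul p (conj a)) ∧ q = -(mul a p) ∧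
      p = -(mul (conj a) q) ∧ p = -(mul q a)) ∧
    (mul q p = B p p • a ∧ mul p q = B p p • conj a) :=
  hurwitz_constrained_relations_general F h2 A mul B hBsymm e hel her hcl hquad conj hconj pmul
    hpmul hpc₁ hpc₂ hpassoc a p q hnorm htrace haporth hap hqdef
end

section
/- Let A* be any (not necessarily associative or unital) algebra over a field F of characteristic ≠ 2 with product x*y. If σ is a bijective F-linear map of A* satisfying σ(x*y) = (σx)*(σy) for all x, y and σ² = 2σ − 1, then d := σ − 1 is a derivation of A* (d(x*y) = (dx)*y + x*(dy)) satisfying d∘d = 0. Conversely, if d is an F-linear derivation of A* with d∘d = 0, then σ := d + 1 is a bijective F-linear map satisfying σ(x*y) = (σx)*(σy) for all x, y and σ² = 2σ − 1. -/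
/-!
Write `σ = 1 + d`. The relation `σ² = 2σ - 1` says exactly `d² = 0`, and the whole
theorem reduces to the vanishing of the products `(d x) * (d y)`: given it, the identities
`σ(xy) = (σx)(σy)` and `d(xy) = (dx)y + x(dy)` differ precisely by that term. For a
derivation it follows from `0 = d²(xy) = 2 (dx)(dy)`; for an automorphism, from comparing
`σ²(xy) = (σ²x)(σ²y)` with `σ²(xy) = 2σ(xy) - xy`. Both need `2` to be cancellable, and
`1 + d` is invertible with inverse `1 - d`.
-/

theorem AddMonoidHom.bijective_add_self_of_apply_apply_eq_zero {G : Type*} [AddCommGroup G]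
    (d : G →+ G) (hd2 : ∀ x, d (d x) = 0) : Function.Bijective (fun x => d x + x) :=
  Function.bijective_iff_has_inverse.mpr
    ⟨fun x => x - d x, fun x => by simp [hd2], fun x => by simp [hd2]⟩

section SquareZero

variable {R A : Type*} [CommRing R] [AddCommGroup A] [Module R A]
  (mul : A →ₗ[R] A →ₗ[R] A)

theorem mul_sub_self_sub_self_eq_zero_of_map_mul (h2 : IsSMulRegular A (2 : R))
    (σ : A →ₗ[R] A) (hmul : ∀ x y, σ (mul x y) = mul (σ x) (σ y))
    (hsq : ∀ x, σ (σ x) = (2 : R) • σ x - x) (x y : A) :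
    mul (σ x - x) (σ y - y) = 0 := by
  refine h2.right_eq_zero_of_smul ?_
  calc (2 : R) • mul (σ x - x) (σ y - y)
      = mul ((2 : R) • σ x - x) ((2 : R) • σ y - y)
          - ((2 : R) • mul (σ x) (σ y) - mul x y) := by
        simp only [map_sub, map_smul, LinearMap.sub_apply, LinearMap.smul_apply]
        module
    _ = 0 := by rw [← hsq, ← hsq, ← hmul, ← hmul, ← hsq, sub_self]

theorem mul_map_map_eq_zero_of_derivation (h2 : IsSMulRegular A (2 : R))
    (d : A →ₗ[R] A) (hd : ∀ x y, d (mul x y) = mul (d x) y + mul x (d y))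
    (hd2 : ∀ x, d (d x) = 0) (x y : A) :
    mul (d x) (d y) = 0 := by
  refine h2.right_eq_zero_of_smul ?_
  calc (2 : R) • mul (d x) (d y) = d (d (mul x y)) := by
        simp only [hd, map_add, hd2, map_zero, LinearMap.zero_apply, zero_add, add_zero,
          two_smul]
    _ = 0 := hd2 _

end SquareZero

/-- Theorem 4.8.  Let `A*` be any algebra over a field of
characteristic ≠ 2.  If `σ` is a bijective linear automorphism of `A*` with
`σ² = 2σ − 1`, then `d := σ − 1` is a derivation with `d∘d = 0`; conversely,
if `d` is a linear derivation with `d∘d = 0`, then `σ := d + 1` is a bijective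
linear automorphism with `σ² = 2σ − 1`. -/
theorem automorphism_iff_square_zero_derivation
    (F : Type*) [Field F] (h2 : (2 : F) ≠ 0)
    (A : Type*) [AddCommGroup A] [Module F A]
    (mul : A →ₗ[F] A →ₗ[F] A) :
    (∀ σ : A ≃ₗ[F] A,
      (∀ x y : A, σ (mul x y) = mul (σ x) (σ y)) →
      (∀ x : A, σ (σ x) = (2 : F) • σ x - x) →
      ((∀ x y : A, σ (mul x y) - mul x y
          = mul (σ x - x) y + mul x (σ y - y)) ∧
        (∀ x : A, σ (σ x - x) - (σ x - x) = 0))) ∧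
    (∀ d : A →ₗ[F] A,
      (∀ x y : A, d (mul x y) = mul (d x) y + mul x (d y)) →
      (∀ x : A, d (d x) = 0) →
      (Function.Bijective (fun x : A => d x + x) ∧
        (∀ x y : A, d (mul x y) + mul x y = mul (d x + x) (d y + y)) ∧
        (∀ x : A, d (d x + x) + (d x + x) = (2 : F) • (d x + x) - x))) := by
  have h2A : IsSMulRegular A (2 : F) := (IsUnit.mk0 _ h2).isSMulRegular A
  refine ⟨fun σ hmul hsq => ⟨fun x y => ?_, fun x => ?_⟩,
    fun d hd hd2 => ⟨d.toAddMonoidHom.bijective_add_self_of_apply_apply_eq_zero hd2,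
      fun x y => ?_, fun x => ?_⟩⟩
  · have hdd := mul_sub_self_sub_self_eq_zero_of_map_mul mul h2A σ.toLinearMap hmul hsq x y
    simp only [LinearEquiv.coe_coe, map_sub, LinearMap.sub_apply] at hdd ⊢
    rw [hmul]
    linear_combination (norm := module) hdd
  · rw [map_sub, hsq]
    module
  · have hdd := mul_map_map_eq_zero_of_derivation mul h2A d hd hd2 x y
    simp only [hd, map_add, LinearMap.add_apply, hdd]
    abel
  · simp only [map_add, hd2]
    module
end
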